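/- arXiv:1108.1756 — 8 statements merged into one kernel-verified Lean document; each statement's English description precedes it below -/
import Mathlib

section
/- Let m ≥ n ≥ 1 be integers and set β = m/n. Let A ⊆ ℝ^m be bounded and let f : A → ℝ^n be locally C^{0,β} at every x ∈ A with a constant M < ∞ independent of x (the radius may depend on x). Then μ_n(f(A)) ≤ C · M^n · μ_m(A), where C < ∞ is a constant depending only on n and m. -/
open MeasureTheory Metric ENNReal

/-!
Cover `A` by Besicovitch balls `B(x, r)` with `∑ μ_m(B(x, r)) ≤ μ_m(A) + ε`, with `r` below the
Hölder radius at `x`. Each `f(B(x, r) ∩ A)` lies in the ball `B(f x, M r^β)`, whose `n`-volume is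
`Mⁿ r^{βn} = Mⁿ r^m` times that of the unit ball, i.e. a fixed multiple of `μ_m(B(x, r))`
precisely because `β = m/n`. Summing over the cover and letting `ε → 0` gives the bound.
-/

section Covering

variable {α β : Type*} [MetricSpace α] [SecondCountableTopology α] [MeasurableSpace α]
  [OpensMeasurableSpace α] [HasBesicovitchCovering α] [MeasurableSpace β]

theorem measure_image_le_mul_of_forall_closedBall (μ : Measure α) [SFinite μ]
    [μ.OuterRegular] (ν : Measure β) {A : Set α} {f : α → β} {K : ℝ≥0∞} (hK : K ≠ ⊤)
    (h : ∀ x ∈ A, ∃ R > (0 : ℝ), ∀ r ∈ Set.Ioo 0 R,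
      ν (f '' (closedBall x r ∩ A)) ≤ K * μ (closedBall x r)) :
    ν (f '' A) ≤ K * μ A := by
  choose! R hRpos hR using h
  have hR_acc : ∀ x ∈ A, ∀ δ > (0 : ℝ), (Set.Ioo 0 (R x) ∩ Set.Ioo 0 δ).Nonempty := by
    intro x hx δ hδ
    rw [Set.Ioo_inter_Ioo, sup_idem]
    exact Set.nonempty_Ioo.2 (lt_min (hRpos x hx) hδ)
  refine ENNReal.le_of_forall_pos_le_add fun δ hδ _ ↦ ?_
  have hε : (δ : ℝ≥0∞) / K ≠ 0 := ENNReal.div_ne_zero.2 ⟨by simpa using hδ.ne', hK⟩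
  obtain ⟨t, r, ht_count, htA, hr, hAt, hsum⟩ :=
    Besicovitch.exists_closedBall_covering_tsum_measure_le μ hε _ A hR_acc
  have himage : f '' A ⊆ ⋃ x ∈ t, f '' (closedBall x (r x) ∩ A) := by
    rintro _ ⟨a, ha, rfl⟩
    obtain ⟨x, hxt, hax⟩ := Set.mem_iUnion₂.1 (hAt ha)
    exact Set.mem_iUnion₂.2 ⟨x, hxt, a, ⟨hax, ha⟩, rfl⟩
  calc ν (f '' A) ≤ ∑' x : t, ν (f '' (closedBall x (r x) ∩ A)) :=
        (measure_mono himage).trans (measure_biUnion_le _ ht_count _)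
    _ ≤ ∑' x : t, K * μ (closedBall x (r x)) :=
        ENNReal.tsum_le_tsum fun x ↦ hR x (htA x.2) (r x) (hr x x.2)
    _ ≤ K * (μ A + δ / K) := by
        rw [ENNReal.tsum_mul_left]
        gcongr
    _ ≤ K * μ A + δ := by
        rw [mul_add]
        gcongr
        exact ENNReal.mul_div_le

end Covering

theorem image_closedBall_inter_subset_closedBall {E F : Type*} [SeminormedAddCommGroup E]
    [SeminormedAddCommGroup F] {f : E → F} {A : Set E} {x : E} {M R r β : ℝ} (hM : 0 ≤ M)
    (hβ : 0 ≤ β) (hrR : r ≤ R)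
    (hf : ∀ x' ∈ closedBall x R ∩ A, ‖f x - f x'‖ ≤ M * ‖x - x'‖ ^ β) :
    f '' (closedBall x r ∩ A) ⊆ closedBall (f x) (M * r ^ β) := by
  rintro _ ⟨x', ⟨hx'r, hx'A⟩, rfl⟩
  rw [mem_closedBall_iff_norm']
  calc ‖f x - f x'‖ ≤ M * ‖x - x'‖ ^ β := hf x' ⟨closedBall_subset_closedBall hrR hx'r, hx'A⟩
    _ ≤ M * r ^ β := by
        gcongr
        exact mem_closedBall_iff_norm'.1 hx'r

open Module in
theorem addHaar_closedBall_mul_rpow_finrank_div_finrank {E F : Type*} [NormedAddCommGroup E]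
    [NormedSpace ℝ E] [MeasurableSpace E] [BorelSpace E] [FiniteDimensional ℝ E]
    [NormedAddCommGroup F] [NormedSpace ℝ F] [MeasurableSpace F] [BorelSpace F]
    [FiniteDimensional ℝ F] (μ : Measure E) [μ.IsAddHaarMeasure] (ν : Measure F)
    [ν.IsAddHaarMeasure] (hF : finrank ℝ F ≠ 0) {M r : ℝ} (hM : 0 ≤ M) (hr : 0 ≤ r)
    (x : E) (y : F) :
    ν (closedBall y (M * r ^ ((finrank ℝ E : ℝ) / finrank ℝ F))) =
      ν (ball 0 1) / μ (ball 0 1) * ENNReal.ofReal M ^ finrank ℝ F * μ (closedBall x r) := by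
  have hrpow : (r ^ ((finrank ℝ E : ℝ) / finrank ℝ F)) ^ finrank ℝ F = r ^ finrank ℝ E := by
    rw [← Real.rpow_natCast, ← Real.rpow_mul hr, div_mul_cancel₀ _ (by exact_mod_cast hF),
      Real.rpow_natCast]
  have hμ₀ : μ (ball 0 1) ≠ 0 := (measure_ball_pos μ _ one_pos).ne'
  have hμ : μ (ball 0 1) ≠ ⊤ := measure_ball_lt_top.ne
  rw [Measure.addHaar_closedBall ν _ (by positivity), Measure.addHaar_closedBall μ _ hr, mul_pow,
    hrpow, ENNReal.ofReal_mul (by positivity), ENNReal.ofReal_pow hM]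
  calc ENNReal.ofReal M ^ finrank ℝ F * ENNReal.ofReal (r ^ finrank ℝ E) * ν (ball 0 1)
      = ENNReal.ofReal M ^ finrank ℝ F * ENNReal.ofReal (r ^ finrank ℝ E) *
          (ν (ball 0 1) / μ (ball 0 1) * μ (ball 0 1)) := by
        rw [ENNReal.div_mul_cancel hμ₀ hμ]
    _ = _ := by ring

theorem holder_measure_change_general (n m : ℕ) (hn : 1 ≤ n) :
    ∃ C : ℝ≥0∞, C ≠ ⊤ ∧
      ∀ (A : Set (EuclideanSpace ℝ (Fin m))), Bornology.IsBounded A →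
        ∀ (f : EuclideanSpace ℝ (Fin m) → EuclideanSpace ℝ (Fin n)) (M : ℝ), 0 ≤ M →
          (∀ x ∈ A, ∃ r > (0 : ℝ), ∀ x' ∈ closedBall x r ∩ A,
            ‖f x - f x'‖ ≤ M * ‖x - x'‖ ^ ((m : ℝ) / n)) →
          volume (f '' A) ≤ C * ENNReal.ofReal M ^ n * volume A := by
  set C := volume (ball (0 : EuclideanSpace ℝ (Fin n)) 1) /
    volume (ball (0 : EuclideanSpace ℝ (Fin m)) 1)
  have hC : C ≠ ⊤ :=
    ENNReal.div_ne_top measure_ball_lt_top.ne (measure_ball_pos _ _ one_pos).ne'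
  refine ⟨C, hC, fun A _ f M hM hf ↦ ?_⟩
  refine measure_image_le_mul_of_forall_closedBall volume volume
    (ENNReal.mul_ne_top hC (ENNReal.pow_ne_top ofReal_ne_top)) fun x hx ↦ ?_
  obtain ⟨R, hR, hfR⟩ := hf x hx
  refine ⟨R, hR, fun r hr ↦ ?_⟩
  calc volume (f '' (closedBall x r ∩ A))
      ≤ volume (closedBall (f x) (M * r ^ ((m : ℝ) / n))) := measure_mono <|
        image_closedBall_inter_subset_closedBall hM (by positivity) hr.2.le hfR
    _ = C * ENNReal.ofReal M ^ n * volume (closedBall x r) := by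
        simpa using addHaar_closedBall_mul_rpow_finrank_div_finrank volume volume
          (by simp; omega) hM hr.1.le x (f x)

/-- If `A ⊆ ℝᵐ` is bounded (`m ≥ n ≥ 1`) and `f : A → ℝⁿ` is locally
`C^{0,β}` at every point of `A` with exponent `β = m/n` and a constant `M` independent of
the point (the radius may depend on the point), then `μ_n(f '' A) ≤ C * Mⁿ * μ_m(A)` where
`C < ∞` depends only on `n` and `m`. -/
theorem holder_measure_change (n m : ℕ) (hn : 1 ≤ n) (hnm : n ≤ m) :
    ∃ C : ℝ≥0∞, C ≠ ⊤ ∧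
      ∀ (A : Set (EuclideanSpace ℝ (Fin m))), Bornology.IsBounded A →
        ∀ (f : EuclideanSpace ℝ (Fin m) → EuclideanSpace ℝ (Fin n)) (M : ℝ), 0 ≤ M →
          (∀ x ∈ A, ∃ r > (0 : ℝ), ∀ x' ∈ closedBall x r ∩ A,
            ‖f x - f x'‖ ≤ M * ‖x - x'‖ ^ ((m : ℝ) / n)) →
          volume (f '' A) ≤ C * ENNReal.ofReal M ^ n * volume A :=
  holder_measure_change_general n m hn
end

section
/- Let m ≥ n ≥ 1 be integers, let D ⊆ ℝ^n be arbitrary, let f : D → ℝ^m be an arbitrary function, and set α = n/m. Then for almost every x ∈ D (i.e. outside a set of Lebesgue outer measure zero) there exists a sequence (x_k) ⊆ D \ {x} converging to x such that limsup_{k→∞} |f(x) − f(x_k)| / |x − x_k|^α < ∞. -/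
/-!
Call `x ∈ D` bad if for every `C` the inequality `C * |x - y| ^ α ≤ |f x - f y|` holds for all
`y ∈ D` close enough to `x`. Bad points are covered by countably many sets `A` on which this holds
for `C = 1` and all pairs of points of `A` (pieces of a small cube) and whose image has finite
`m`-dimensional Hausdorff measure. Fix `C` and cut `A` into lattice cubes so small that the
`C`-inequality holds on each of them: there `f⁻¹` is `(m / n)`-Hölder with constant `C ^ (-m / n)`,
so `μH[n]` of a cube piece is at most `C ^ (-m)` times `μH[m]` of its image. Cubes of one of the
`2 ^ n` parity classes are separated, hence by the `C = 1` inequality so are their images, and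
`μH[n] A ≤ 2 ^ n * C ^ (-m) * μH[m] (f '' A)`. Letting `C → ∞` gives `μH[n] A = 0`, and Lebesgue
measure on `ℝⁿ` is a multiple of `μH[n]`.
-/

open MeasureTheory Filter Topology Set Metric
open scoped ENNReal

theorem tsum_measure_le_measure_iUnion_of_separated {X ι : Type*} [PseudoMetricSpace X]
    [MeasurableSpace X] [OpensMeasurableSpace X] [Countable ι] (μ : Measure X) {T : ι → Set X}
    {ε : ℝ} (hε : 0 < ε) (hsep : Pairwise fun i j => ∀ u ∈ T i, ∀ v ∈ T j, ε ≤ dist u v) :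
    ∑' i, μ (T i) ≤ μ (⋃ i, T i) := by
  set M := toMeasurable μ (⋃ i, T i)
  set U : ι → Set X := fun i => thickening (ε / 2) (T i) ∩ M
  have hTU (i : ι) : T i ⊆ U i :=
    subset_inter (self_subset_thickening (half_pos hε) _)
      ((subset_iUnion T i).trans (subset_toMeasurable μ _))
  have hU (i : ι) : MeasurableSet (U i) :=
    isOpen_thickening.measurableSet.inter (measurableSet_toMeasurable μ _)
  have hdisj : Pairwise (Function.onFun Disjoint U) := by
    intro i j hij
    refine Set.disjoint_left.2 fun u hui huj => ?_
    obtain ⟨t, ht, htu⟩ := mem_thickening_iff.1 hui.1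
    obtain ⟨t', ht', ht'u⟩ := mem_thickening_iff.1 huj.1
    linarith [hsep hij t ht t' ht', dist_triangle_right t t' u, dist_comm u t, dist_comm u t']
  calc ∑' i, μ (T i) ≤ ∑' i, μ (U i) := ENNReal.tsum_le_tsum fun i => measure_mono (hTU i)
    _ = μ (⋃ i, U i) := (measure_iUnion hdisj hU).symm
    _ ≤ μ M := measure_mono (iUnion_subset fun _ => inter_subset_right)
    _ = μ (⋃ i, T i) := measure_toMeasurable _

theorem hausdorffMeasure_le_mul_image_of_inverseHolder {X Y : Type*} [MetricSpace X]
    [MeasurableSpace X] [BorelSpace X] [MetricSpace Y] [MeasurableSpace Y] [BorelSpace Y]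
    {f : X → Y} {s : Set X}
    {C d e : ℝ} (hC : 0 < C) (hd : 0 < d) (he : 0 < e)
    (h : ∀ x ∈ s, ∀ y ∈ s, C * dist x y ^ (d / e) ≤ dist (f x) (f y)) :
    μH[d] s ≤ ENNReal.ofReal (C ^ (-e)) * μH[e] (f '' s) := by
  have hinj : InjOn f s := by
    intro x hx y hy hxy
    by_contra hne
    have := h x hx y hy
    rw [hxy, dist_self] at this
    have : 0 < C * dist x y ^ (d / e) := by
      have := dist_pos.2 hne
      positivity
    linarith
  rcases s.eq_empty_or_nonempty with rfl | ⟨x₀, -⟩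
  · simp
  have : Nonempty X := ⟨x₀⟩
  have hg : HolderOnWith (C ^ (-(e / d))).toNNReal (e / d).toNNReal (Function.invFunOn f s)
      (f '' s) := by
    rintro _ ⟨x, hx, rfl⟩ _ ⟨y, hy, rfl⟩
    rw [hinj.leftInvOn_invFunOn hx, hinj.leftInvOn_invFunOn hy, edist_dist, edist_dist,
      ENNReal.coe_nnreal_eq, Real.coe_toNNReal _ (by positivity),
      Real.coe_toNNReal _ (by positivity),
      ENNReal.ofReal_rpow_of_nonneg dist_nonneg (by positivity),
      ← ENNReal.ofReal_mul (by positivity)]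
    refine ENNReal.ofReal_le_ofReal ?_
    calc dist x y = (dist x y ^ (d / e)) ^ (e / d) := by
          rw [← Real.rpow_mul dist_nonneg, div_mul_div_cancel₀ he.ne', div_self hd.ne',
            Real.rpow_one]
      _ ≤ (C⁻¹ * dist (f x) (f y)) ^ (e / d) := by
          gcongr
          rw [inv_mul_eq_div, le_div_iff₀ hC, mul_comm]
          exact h x hx y hy
      _ = C ^ (-(e / d)) * dist (f x) (f y) ^ (e / d) := by
          rw [Real.mul_rpow (by positivity) dist_nonneg, Real.inv_rpow hC.le, Real.rpow_neg hC.le]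
  have := hg.hausdorffMeasure_image_le (Real.toNNReal_pos.2 (by positivity)) hd.le
  rw [hinj.invFunOn_image subset_rfl, Real.coe_toNNReal _ (by positivity),
    div_mul_cancel₀ _ hd.ne'] at this
  calc μH[d] s ≤ ENNReal.ofReal (C ^ (-(e / d))) ^ d * μH[e] (f '' s) := this
    _ = ENNReal.ofReal (C ^ (-e)) * μH[e] (f '' s) := by
      rw [ENNReal.ofReal_rpow_of_nonneg (by positivity) hd.le, ← Real.rpow_mul hC.le, neg_mul,
        div_mul_cancel₀ _ hd.ne']

section InverseHolderSet

variable {X Y : Type*} [PseudoMetricSpace X] [PseudoMetricSpace Y]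

def inverseHolderSet (D : Set X) (f : X → Y) (α C δ : ℝ) : Set X :=
  {x ∈ D | ∀ y ∈ D, y ≠ x → dist x y < δ → C * dist x y ^ α ≤ dist (f x) (f y)}

variable {D : Set X} {f : X → Y} {α C δ : ℝ}

theorem inverseHolderSet_subset : inverseHolderSet D f α C δ ⊆ D := fun _ hx => hx.1

theorem inverseHolderSet_anti {δ' : ℝ} (h : δ ≤ δ') :
    inverseHolderSet D f α C δ' ⊆ inverseHolderSet D f α C δ :=
  fun _ hx => ⟨hx.1, fun y hy hyx hxy => hx.2 y hy hyx (hxy.trans_le h)⟩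

theorem le_dist_of_mem_inverseHolderSet (hα : α ≠ 0) {x y : X}
    (hx : x ∈ inverseHolderSet D f α C δ) (hy : y ∈ D) (hxy : dist x y < δ) :
    C * dist x y ^ α ≤ dist (f x) (f y) := by
  rcases eq_or_ne y x with rfl | hyx
  · simp [Real.zero_rpow hα]
  · exact hx.2 y hy hyx hxy

theorem exists_seq_of_forall_notMem_inverseHolderSet {x : X} (hx : x ∈ D)
    (h : ∀ k : ℕ, x ∉ inverseHolderSet D f α C ((k : ℝ) + 1)⁻¹) :
    ∃ u : ℕ → X, (∀ k, u k ∈ D \ {x}) ∧ Tendsto u atTop (𝓝 x) ∧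
      ∀ k, dist (f x) (f (u k)) < C * dist x (u k) ^ α := by
  have (k : ℕ) : ∃ y ∈ D, y ≠ x ∧ dist x y < ((k : ℝ) + 1)⁻¹ ∧
      dist (f x) (f y) < C * dist x y ^ α := by
    simpa [inverseHolderSet, hx] using h k
  choose u huD hux hdist hf using this
  refine ⟨u, fun k => ⟨huD k, hux k⟩, ?_, hf⟩
  rw [tendsto_iff_dist_tendsto_zero]
  refine squeeze_zero (fun _ => dist_nonneg) (fun k => ?_) tendsto_one_div_add_atTop_nhds_zero_nat
  rw [dist_comm, one_div]
  exact (hdist k).le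

end InverseHolderSet

theorem Int.one_lt_abs_sub_of_two_le_abs_floor_sub {a b : ℝ} (h : 2 ≤ |⌊a⌋ - ⌊b⌋|) :
    1 < |a - b| := by
  have h' : (2 : ℝ) ≤ |(⌊a⌋ : ℝ) - ⌊b⌋| := by
    rw [← Int.cast_sub, ← Int.cast_abs]; exact_mod_cast h
  have := Int.floor_le a; have := Int.lt_floor_add_one a
  have := Int.floor_le b; have := Int.lt_floor_add_one b
  rw [lt_abs]
  rcases le_abs'.1 h' with h | h
  · right; linarith
  · left; linarith

section LatticeCube

variable {n : ℕ}

noncomputable def cubeIndex (s : ℝ) (x : EuclideanSpace ℝ (Fin n)) : Fin n → ℤ := fun i => ⌊x i / s⌋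

theorem dist_le_of_cubeIndex_eq {s : ℝ} (hs : 0 < s) {x y : EuclideanSpace ℝ (Fin n)}
    (h : cubeIndex s x = cubeIndex s y) : dist x y ≤ √n * s := by
  have hcoord (i : Fin n) : dist (x i) (y i) ^ 2 ≤ s ^ 2 := by
    have := Int.abs_sub_lt_one_of_floor_eq_floor (congrFun h i)
    rw [← sub_div, abs_div, abs_of_pos hs, div_lt_one hs] at this
    rw [Real.dist_eq]
    gcongr
  calc dist x y = √(∑ i, dist (x i) (y i) ^ 2) := EuclideanSpace.dist_eq x y
    _ ≤ √(n * s ^ 2) := by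
      gcongr
      exact (Finset.sum_le_sum fun i (_ : i ∈ Finset.univ) => hcoord i).trans (by simp)
    _ = √n * s := by rw [Real.sqrt_mul n.cast_nonneg, Real.sqrt_sq hs.le]

theorem dist_lt_of_cubeIndex_eq {δ : ℝ} (hδ : 0 < δ) {x y : EuclideanSpace ℝ (Fin n)}
    (h : cubeIndex (δ / (√n + 1)) x = cubeIndex (δ / (√n + 1)) y) : dist x y < δ := by
  refine (dist_le_of_cubeIndex_eq (by positivity) h).trans_lt ?_
  rw [mul_div_assoc', div_lt_iff₀ (by positivity)]
  linarith

theorem le_dist_of_cubeIndex_ne {s : ℝ} (hs : 0 < s) {x y : EuclideanSpace ℝ (Fin n)}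
    (hne : cubeIndex s x ≠ cubeIndex s y)
    (hpar : ∀ i, (cubeIndex s x i : ZMod 2) = cubeIndex s y i) : s ≤ dist x y := by
  obtain ⟨i, hi⟩ := Function.ne_iff.1 hne
  have hgap : 2 ≤ |cubeIndex s x i - cubeIndex s y i| := by
    have := (ZMod.intCast_eq_intCast_iff' _ _ 2).1 (hpar i)
    rw [le_abs]
    omega
  have := Int.one_lt_abs_sub_of_two_le_abs_floor_sub hgap
  rw [← sub_div, abs_div, abs_of_pos hs, one_lt_div hs] at this
  exact this.le.trans (PiLp.dist_apply_le x y i)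

end LatticeCube

section

variable {n : ℕ} {Y : Type*} [MetricSpace Y] [MeasurableSpace Y] [BorelSpace Y]
  {f : EuclideanSpace ℝ (Fin n) → Y} {e : ℝ}

theorem hausdorffMeasure_le_two_pow_mul_image_of_locally_inverseHolder
    {A : Set (EuclideanSpace ℝ (Fin n))} {C δ : ℝ} (hn : 0 < n) (he : 0 < e) (hC : 0 < C)
    (hδ : 0 < δ)
    (hglobal : ∀ x ∈ A, ∀ y ∈ A, dist x y ^ ((n : ℝ) / e) ≤ dist (f x) (f y))
    (hlocal : ∀ x ∈ A, ∀ y ∈ A, dist x y < δ → C * dist x y ^ ((n : ℝ) / e) ≤ dist (f x) (f y)) :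
    μH[n] A ≤ 2 ^ n * ENNReal.ofReal (C ^ (-e)) * μH[e] (f '' A) := by
  set s := δ / (√n + 1)
  have hs : 0 < s := by positivity
  set piece : (Fin n → ℤ) → Set (EuclideanSpace ℝ (Fin n)) := fun c => A ∩ cubeIndex s ⁻¹' {c}
  set parity : (Fin n → ℤ) → Fin n → ZMod 2 := fun c i => c i
  set κ := ENNReal.ofReal (C ^ (-e))
  have hpiece (c : Fin n → ℤ) : μH[n] (piece c) ≤ κ * μH[e] (f '' piece c) :=
    hausdorffMeasure_le_mul_image_of_inverseHolder hC (Nat.cast_pos.2 hn) he fun x hx y hy =>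
      hlocal x hx.1 y hy.1 (dist_lt_of_cubeIndex_eq hδ (hx.2.trans hy.2.symm))
  have hclass (v : Fin n → ZMod 2) :
      ∑' c : {c // parity c = v}, μH[e] (f '' piece c) ≤ μH[e] (f '' A) := by
    refine (tsum_measure_le_measure_iUnion_of_separated _ (ε := s ^ ((n : ℝ) / e))
      (by positivity) ?_).trans (measure_mono (iUnion_subset fun c => image_mono inter_subset_left))
    rintro ⟨c, hc⟩ ⟨c', hc'⟩ hne _ ⟨x, ⟨hxA, hxc : cubeIndex s x = c⟩, rfl⟩
      _ ⟨y, ⟨hyA, hyc : cubeIndex s y = c'⟩, rfl⟩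
    -- distinct cubes of one parity class are `s`-separated, so the images are `s ^ α`-separated
    have hsep : s ≤ dist x y := by
      refine le_dist_of_cubeIndex_ne hs (by rw [hxc, hyc]; exact fun h => hne (Subtype.ext h))
        fun i => ?_
      rw [hxc, hyc]
      exact congrFun (hc.trans hc'.symm) i
    exact le_trans (by gcongr) (hglobal x hxA y hyA)
  have hcover : A ⊆ ⋃ v, ⋃ c : {c // parity c = v}, piece c := fun x hx =>
    mem_iUnion₂.2 ⟨_, ⟨cubeIndex s x, rfl⟩, hx, rfl⟩
  calc μH[n] A ≤ μH[n] (⋃ v, ⋃ c : {c // parity c = v}, piece c) := measure_mono hcover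
    _ ≤ ∑' v, ∑' c : {c // parity c = v}, μH[n] (piece c) :=
      (measure_iUnion_le _).trans (ENNReal.tsum_le_tsum fun v => measure_iUnion_le _)
    _ ≤ ∑' v : Fin n → ZMod 2, κ * μH[e] (f '' A) := ENNReal.tsum_le_tsum fun v =>
      (ENNReal.tsum_le_tsum fun c : {c // parity c = v} => hpiece c).trans
        (ENNReal.tsum_mul_left.trans_le (mul_le_mul_right (hclass v) κ))
    _ = 2 ^ n * κ * μH[e] (f '' A) := by simp [mul_assoc]

variable {D : Set (EuclideanSpace ℝ (Fin n))}

theorem hausdorffMeasure_le_of_subset_iUnion_inverseHolderSet (hn : 0 < n) (he : 0 < e)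
    {C : ℝ} (hC : 0 < C) {A : Set (EuclideanSpace ℝ (Fin n))}
    (hglobal : ∀ x ∈ A, ∀ y ∈ A, dist x y ^ ((n : ℝ) / e) ≤ dist (f x) (f y))
    (hA : A ⊆ ⋃ k : ℕ, inverseHolderSet D f (n / e) C ((k : ℝ) + 1)⁻¹) :
    μH[n] A ≤ 2 ^ n * ENNReal.ofReal (C ^ (-e)) * μH[e] (f '' A) := by
  set S := fun k : ℕ => A ∩ inverseHolderSet D f (n / e) C ((k : ℝ) + 1)⁻¹
  have hmono : Monotone S := fun k k' hk =>
    inter_subset_inter_right _ (inverseHolderSet_anti (by gcongr))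
  calc μH[n] A ≤ μH[n] (⋃ k, S k) := measure_mono ((subset_inter subset_rfl hA).trans
        (inter_iUnion _ _).subset)
    _ = ⨆ k, μH[n] (S k) := hmono.measure_iUnion
    _ ≤ 2 ^ n * ENNReal.ofReal (C ^ (-e)) * μH[e] (f '' A) := iSup_le fun k =>
      (hausdorffMeasure_le_two_pow_mul_image_of_locally_inverseHolder hn he hC (by positivity)
        (fun x hx y hy => hglobal x hx.1 y hy.1) (fun x hx y hy hxy =>
          le_dist_of_mem_inverseHolderSet (by positivity) hx.2 (inverseHolderSet_subset hy.2)
            hxy)).trans (by gcongr; exact inter_subset_left)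

theorem hausdorffMeasure_eq_zero_of_subset_iInter_iUnion_inverseHolderSet (hn : 0 < n)
    (he : 0 < e) {A : Set (EuclideanSpace ℝ (Fin n))}
    (hglobal : ∀ x ∈ A, ∀ y ∈ A, dist x y ^ ((n : ℝ) / e) ≤ dist (f x) (f y))
    (hA : A ⊆ ⋂ C : ℕ, ⋃ k : ℕ, inverseHolderSet D f (n / e) C ((k : ℝ) + 1)⁻¹)
    (hfin : μH[e] (f '' A) ≠ ∞) : μH[n] A = 0 := by
  have hbound : ∀ᶠ C : ℕ in atTop,
      μH[n] A ≤ 2 ^ n * ENNReal.ofReal ((C : ℝ) ^ (-e)) * μH[e] (f '' A) :=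
    eventually_atTop.2 ⟨1, fun C hC => hausdorffMeasure_le_of_subset_iUnion_inverseHolderSet hn
      he (Nat.cast_pos.2 hC) hglobal (hA.trans (iInter_subset _ C))⟩
  have hlim : Tendsto (fun C : ℕ => 2 ^ n * ENNReal.ofReal ((C : ℝ) ^ (-e)) * μH[e] (f '' A))
      atTop (𝓝 0) := by
    have := ENNReal.tendsto_ofReal ((tendsto_rpow_neg_atTop he).comp tendsto_natCast_atTop_atTop)
    simpa using ENNReal.Tendsto.mul_const (ENNReal.Tendsto.const_mul this (Or.inr (by simp)))
      (Or.inr hfin)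
  exact le_zero_iff.1 (ge_of_tendsto hlim hbound)

theorem hausdorffMeasure_iInter_iUnion_inverseHolderSet_eq_zero
    [SigmaFinite (μH[e] : Measure Y)] (hn : 0 < n) (he : 0 < e)
    (D : Set (EuclideanSpace ℝ (Fin n))) (f : EuclideanSpace ℝ (Fin n) → Y) :
    μH[n] (⋂ C : ℕ, ⋃ k : ℕ, inverseHolderSet D f (n / e) C ((k : ℝ) + 1)⁻¹) = 0 := by
  set B := ⋂ C : ℕ, ⋃ k : ℕ, inverseHolderSet D f (n / e) C ((k : ℝ) + 1)⁻¹
  set piece : ℕ → (Fin n → ℤ) → ℕ → Set (EuclideanSpace ℝ (Fin n)) := fun k c j =>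
    B ∩ inverseHolderSet D f (n / e) 1 ((k : ℝ) + 1)⁻¹ ∩
      cubeIndex (((k : ℝ) + 1)⁻¹ / (√n + 1)) ⁻¹' {c} ∩ f ⁻¹' spanningSets μH[e] j
  have hcover : B ⊆ ⋃ (k) (c) (j), piece k c j := by
    intro x hx
    obtain ⟨k, hk⟩ := mem_iUnion.1 (mem_iInter.1 hx 1)
    obtain ⟨j, hj⟩ := mem_iUnion.1 ((iUnion_spanningSets (μH[e] : Measure Y)).symm ▸ mem_univ (f x))
    simp only [mem_iUnion]
    exact ⟨k, _, j, ⟨⟨hx, by simpa using hk⟩, rfl⟩, hj⟩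
  refine measure_mono_null hcover (measure_iUnion_null fun k => measure_iUnion_null fun c =>
    measure_iUnion_null fun j => ?_)
  refine hausdorffMeasure_eq_zero_of_subset_iInter_iUnion_inverseHolderSet hn he
    (fun x hx y hy => ?_) (fun x hx => hx.1.1.1)
    (ne_top_of_le_ne_top (measure_spanningSets_lt_top _ j).ne
      (measure_mono (image_subset_iff.2 fun x hx => hx.2)))
  simpa using le_dist_of_mem_inverseHolderSet (by positivity) hx.1.1.2
    (inverseHolderSet_subset hy.1.1.2) (dist_lt_of_cubeIndex_eq (by positivity)
      (hx.1.2.trans hy.1.2.symm))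

end

theorem EuclideanSpace.volume_absolutelyContinuous_hausdorffMeasure (n : ℕ) :
    (volume : Measure (EuclideanSpace ℝ (Fin n))) ≪ μH[n] := by
  rw [Measure.isAddLeftInvariant_eq_smul volume μH[n]]
  exact Measure.smul_absolutelyContinuous

/-- For `m ≥ n ≥ 1`, any `D ⊆ ℝⁿ` and any `f : D → ℝᵐ`, for almost every
`x ∈ D` (outside a set of Lebesgue outer measure zero) there is a sequence
`(x_k) ⊆ D \ {x}` converging to `x` with
`limsup_k |f(x) - f(x_k)| / |x - x_k|^α < ∞`, where `α = n/m`. -/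
theorem holder_sequence_ae (n m : ℕ) (hn : 1 ≤ n) (hnm : n ≤ m)
    (D : Set (EuclideanSpace ℝ (Fin n)))
    (f : EuclideanSpace ℝ (Fin n) → EuclideanSpace ℝ (Fin m)) :
    volume {x ∈ D | ¬ ∃ x_k : ℕ → EuclideanSpace ℝ (Fin n),
      (∀ k, x_k k ∈ D \ {x}) ∧ Tendsto x_k atTop (𝓝 x) ∧
      Filter.limsup (fun k =>
        ENNReal.ofReal (‖f x - f (x_k k)‖ / ‖x - x_k k‖ ^ ((n : ℝ) / m))) atTop < ⊤} = 0 := by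
  have hm : (0 : ℝ) < m := Nat.cast_pos.2 (lt_of_lt_of_le hn hnm)
  refine measure_mono_null ?_ (EuclideanSpace.volume_absolutelyContinuous_hausdorffMeasure n
    (hausdorffMeasure_iInter_iUnion_inverseHolderSet_eq_zero hn hm D f))
  rintro x ⟨hxD, hx⟩
  by_contra hgood
  simp only [mem_iInter, mem_iUnion, not_forall, not_exists] at hgood
  obtain ⟨C, hC⟩ := hgood
  obtain ⟨u, huD, hux, hfu⟩ := exists_seq_of_forall_notMem_inverseHolderSet hxD hC
  refine hx ⟨u, huD, hux, (limsup_le_of_le (by isBoundedDefault) (Eventually.of_forall fun k =>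
    ENNReal.ofReal_le_ofReal ?_)).trans_lt (ENNReal.ofReal_lt_top (r := C))⟩
  rw [← dist_eq_norm, ← dist_eq_norm]
  exact div_le_of_le_mul₀ (by positivity) C.cast_nonneg (hfu k).le
end

section
/- Let m ≥ n ≥ 1 be integers, let D ⊆ ℝ^n be arbitrary, let f : D → ℝ^m be an arbitrary function, and set α = n/m. Then for almost every x ∈ D there exists a subset C ⊆ D containing x, having x as a limit point (i.e. x is an accumulation point of C \ {x}), and a constant M < ∞ such that f is uniformly C^{0,α} on C, i.e. |f(y) − f(y')| ≤ M·|y − y'|^α for all y, y' ∈ C. -/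
/-!
At a point `x ∈ D` either, for some `K`, there are points `y ∈ D` arbitrarily close to `x` with
`|f y - f x| < K |y - x|^α`, or for every `K` the reverse inequality `K |y - x|^α ≤ |f y - f x|`
holds for all `y ∈ D` near `x`. In the first case, such points whose distances to `x` at least
halve at each step form, together with `x`, a set on which `f` is uniformly `α`-Hölder.

The points of the second kind form a null set. Split them into countably many pieces of diameter
`< r₀` on which `f` is bounded and expands at rate `1` at scale `r₀`. On such a piece, two points
whose images are `4δ`-close are themselves close, hence (by expansion at rate `K` at small scales)
at distance at most `(4δ/K)^(1/α)`. Covering the image by `2δ`-balls around a maximal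
`2δ`-separated net, whose size is `≲ δ^(-m)` by volume, bounds the measure of the piece by
`≲ δ^(-m) (4δ/K)^(n/α) = (4/K)^m`, since `α = n/m`; this tends to `0` as `K → ∞`.
-/

open MeasureTheory Filter Topology Metric Set Module Function
open scoped NNReal

section MetricSpace

variable {X Y : Type*} [PseudoMetricSpace X] [PseudoMetricSpace Y]

def expandingSet (D : Set X) (f : X → Y) (α K r : ℝ) : Set X :=
  {x ∈ D | ∀ y ∈ D, dist y x < r → K * dist y x ^ α ≤ dist (f y) (f x)}

lemma expandingSet_anti {D : Set X} {f : X → Y} {α K r r' : ℝ} (h : r ≤ r') :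
    expandingSet D f α K r' ⊆ expandingSet D f α K r :=
  fun _ hx => ⟨hx.1, fun y hy hyx => hx.2 y hy (hyx.trans_le h)⟩

lemma mul_dist_rpow_le_of_mem_expandingSet {D : Set X} {f : X → Y} {α K r₀ r : ℝ} {x y : X}
    (hα : 0 < α) (hr : 0 ≤ r) (hx₀ : x ∈ expandingSet D f α 1 r₀)
    (hx : x ∈ expandingSet D f α K r) (hy : y ∈ D) (hyx : dist y x < r₀)
    (hf : dist (f y) (f x) < r ^ α) : K * dist y x ^ α ≤ dist (f y) (f x) := by
  refine hx.2 y hy ((Real.rpow_lt_rpow_iff dist_nonneg hr hα).1 ?_)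
  linarith [hx₀.2 y hy hyx]

lemma exists_seq_tendsto_dist_le_two_mul_dist {S : Set X} {x : X}
    (hS : ∀ r > 0, ∃ y ∈ S, 0 < dist y x ∧ dist y x < r) :
    ∃ u : ℕ → X, (∀ k, u k ∈ S ∧ 0 < dist (u k) x) ∧ Tendsto u atTop (𝓝 x) ∧
      ∀ p q, p ≠ q → dist (u p) x ≤ 2 * dist (u p) (u q) := by
  let P : Set X := {y ∈ S | 0 < dist y x}
  choose next hnext using fun y : P => hS _ (half_pos y.2.2)
  let step : P → P := fun y => ⟨next y, (hnext y).1, (hnext y).2.1⟩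
  obtain ⟨y₀, hy₀, hy₀x, -⟩ := hS 1 one_pos
  let u : ℕ → X := fun k => (step^[k] ⟨y₀, hy₀, hy₀x⟩ : P)
  have hu : ∀ k, u k ∈ S ∧ 0 < dist (u k) x := fun k => (step^[k] _).2
  have hhalf : ∀ k, dist (u (k + 1)) x ≤ dist (u k) x / 2 := fun k => by
    simp only [u, iterate_succ_apply']
    exact (hnext _).2.2.le
  have hlt : ∀ p q, p < q → dist (u q) x ≤ dist (u p) x / 2 := fun p q hpq =>
    (antitone_nat_of_succ_le (f := fun k => dist (u k) x)
      (fun k => (hhalf k).trans (half_le_self dist_nonneg)) hpq).trans (hhalf p)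
  have hgeom : ∀ k, dist (u k) x ≤ dist (u 0) x * (1 / 2) ^ k := fun k => by
    induction k with
    | zero => simp
    | succ k ih => rw [pow_succ]; linarith [hhalf k]
  refine ⟨u, hu, tendsto_iff_dist_tendsto_zero.2 (squeeze_zero (fun _ => dist_nonneg) hgeom ?_),
    fun p q hpq => ?_⟩
  · simpa using (tendsto_pow_atTop_nhds_zero_of_lt_one (by norm_num : (0 : ℝ) ≤ 1 / 2)
      (by norm_num)).const_mul (dist (u 0) x)
  rcases hpq.lt_or_gt with hpq | hqp
  · linarith [hlt p q hpq, dist_triangle (u p) (u q) x]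
  · linarith [hlt q p hqp, dist_triangle_left (u q) x (u p), (hu p).2]

lemma dist_le_mul_rpow_of_dist_le_two_mul_dist {f : X → Y} {T : Set X} {x : X} {α K : ℝ}
    (hα : 0 ≤ α) (hK : 0 ≤ K) (hf : ∀ a ∈ T, dist (f a) (f x) ≤ K * dist a x ^ α)
    (hT : ∀ a ∈ T, ∀ b ∈ T, a ≠ b → dist a x ≤ 2 * dist a b) :
    ∀ a ∈ insert x T, ∀ b ∈ insert x T, dist (f a) (f b) ≤ 2 * 2 ^ α * K * dist a b ^ α := by
  have hfx : ∀ a ∈ insert x T, dist (f a) (f x) ≤ K * dist a x ^ α := by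
    rintro a (rfl | ha)
    · simp only [dist_self]; positivity
    · exact hf a ha
  have hTx : ∀ a ∈ insert x T, ∀ b ∈ insert x T, a ≠ b → dist a x ≤ 2 * dist a b := by
    rintro a (rfl | ha) b (rfl | hb) hab
    · exact absurd rfl hab
    · simp only [dist_self]; positivity
    · exact le_mul_of_one_le_left dist_nonneg one_le_two
    · exact hT a ha b hb hab
  intro a ha b hb
  rcases eq_or_ne a b with rfl | hab
  · simp only [dist_self]; positivity
  calc dist (f a) (f b) ≤ dist (f a) (f x) + dist (f b) (f x) := dist_triangle_right _ _ _
    _ ≤ K * dist a x ^ α + K * dist b x ^ α := add_le_add (hfx a ha) (hfx b hb)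
    _ ≤ K * (2 * dist a b) ^ α + K * (2 * dist a b) ^ α := by
        gcongr
        · exact hTx a ha b hb hab
        · rw [dist_comm a b]; exact hTx b hb a ha hab.symm
    _ = 2 * 2 ^ α * K * dist a b ^ α := by rw [Real.mul_rpow zero_le_two dist_nonneg]; ring

theorem exists_holder_subset_of_forall_notMem_expandingSet {D : Set X} {f : X → Y} {x : X}
    {α K : ℝ} (hα : 0 < α) (hxD : x ∈ D) (hx : ∀ r > 0, x ∉ expandingSet D f α K r) :
    ∃ C ⊆ D, x ∈ C ∧ x ∈ closure (C \ {x}) ∧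
      ∃ M : ℝ, ∀ y ∈ C, ∀ y' ∈ C, dist (f y) (f y') ≤ M * dist y y' ^ α := by
  set S := {y ∈ D | dist (f y) (f x) < K * dist y x ^ α}
  have hpos : ∀ y ∈ S, 0 < dist y x := by
    intro y hy
    refine dist_nonneg.lt_of_ne fun h => ?_
    have := hy.2
    rw [← h, Real.zero_rpow hα.ne', mul_zero] at this
    exact dist_nonneg.not_gt this
  obtain ⟨u, hu, hux, hlac⟩ := exists_seq_tendsto_dist_le_two_mul_dist (S := S) fun r hr => by
    have : ¬ ∀ y ∈ D, dist y x < r → K * dist y x ^ α ≤ dist (f y) (f x) :=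
      fun h => hx r hr ⟨hxD, h⟩
    push Not at this
    obtain ⟨y, hyD, hyr, hyf⟩ := this
    exact ⟨y, ⟨hyD, hyf⟩, hpos y ⟨hyD, hyf⟩, hyr⟩
  have hK : 0 ≤ K :=
    (pos_of_mul_pos_left (dist_nonneg.trans_lt (hu 0).1.2) (Real.rpow_nonneg dist_nonneg α)).le
  refine ⟨insert x (range u), insert_subset hxD (range_subset_iff.2 fun k => (hu k).1.1),
    mem_insert _ _, ?_, 2 * 2 ^ α * K, ?_⟩
  · refine mem_closure_of_tendsto hux (Eventually.of_forall fun k =>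
      ⟨mem_insert_of_mem _ (mem_range_self k), fun h => (hu k).2.ne' ?_⟩)
    rw [h, dist_self]
  · refine dist_le_mul_rpow_of_dist_le_two_mul_dist hα.le hK
      (fun a ⟨k, hk⟩ => hk ▸ ((hu k).1.2).le) ?_
    rintro _ ⟨p, rfl⟩ _ ⟨q, rfl⟩ hpq
    exact hlac p q fun h => hpq (h ▸ rfl)

end MetricSpace

lemma Metric.exists_isSeparated_isCover {X : Type*} [PseudoEMetricSpace X] (ε : ℝ≥0)
    (s : Set X) : ∃ N ⊆ s, IsSeparated ε N ∧ IsCover ε s N := by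
  obtain ⟨N, hN⟩ := zorn_subset {N | N ⊆ s ∧ IsSeparated ε N} fun c hc hchain =>
    ⟨⋃₀ c, ⟨sUnion_subset fun N hN => (hc hN).1,
      (pairwise_sUnion hchain.directedOn).2 fun N hN => (hc hN).2⟩,
      fun _ => subset_sUnion_of_mem⟩
  exact ⟨N, hN.prop.1, hN.prop.2, .of_maximal_isSeparated hN⟩

lemma Metric.IsSeparated.encard_mul_measure_ball_le {F : Type*} [NormedAddCommGroup F]
    [MeasurableSpace F] [BorelSpace F] (ν : Measure F) [ν.IsAddHaarMeasure] {N : Set F}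
    {R δ : ℝ} (hN : N ⊆ closedBall 0 R) (hsep : IsSeparated (ENNReal.ofReal (2 * δ)) N) :
    N.encard * ν (ball 0 δ) ≤ ν (ball 0 (R + δ)) := by
  have hdisj : Pairwise (Disjoint on fun u : N => ball (u : F) δ) := by
    intro u v huv
    refine ball_disjoint_ball ?_
    have : ENNReal.ofReal (2 * δ) < edist (u : F) v := hsep u.2 v.2 (Subtype.coe_ne_coe.2 huv)
    rw [edist_dist, ENNReal.ofReal_lt_ofReal_iff'] at this
    linarith [this.1]
  calc N.encard * ν (ball 0 δ) = ∑' u : N, ν (ball (u : F) δ) := by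
        simp only [Measure.addHaar_ball_center, ENNReal.tsum_set_const]
    _ ≤ ν (⋃ u : N, ball (u : F) δ) :=
        tsum_meas_le_meas_iUnion_of_disjoint ν (fun _ => measurableSet_ball) hdisj
    _ ≤ ν (ball 0 (R + δ)) := by
        refine measure_mono (iUnion_subset fun u => ball_subset_ball' ?_)
        have := hN u.2
        rw [mem_closedBall, dist_zero_right] at this
        rw [dist_zero_right]; linarith

section Covering

variable {E F : Type*} [NormedAddCommGroup E] [MeasurableSpace E] [BorelSpace E]
  (μ : Measure E) [μ.IsAddHaarMeasure]
  [NormedAddCommGroup F] [MeasurableSpace F] [BorelSpace F] [ProperSpace F]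
  (ν : Measure F) [ν.IsAddHaarMeasure]

lemma measure_mul_measure_ball_le_of_dist_le {S : Set E} {f : E → F} {R ρ δ : ℝ}
    (hδ : 0 < δ) (hR : f '' S ⊆ closedBall 0 R)
    (hρ : ∀ x ∈ S, ∀ y ∈ S, dist (f x) (f y) ≤ 4 * δ → dist x y ≤ ρ) :
    μ S * ν (ball 0 δ) ≤ μ (closedBall 0 ρ) * ν (ball 0 (R + δ)) := by
  obtain ⟨N, hNS, hsep, hcover⟩ := exists_isSeparated_isCover (2 * δ).toNNReal (f '' S)
  have hcount := hsep.encard_mul_measure_ball_le ν (hNS.trans hR)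
  rw [isCover_iff_subset_iUnion_closedBall, Real.coe_toNNReal _ (by positivity)] at hcover
  have hN : N.Finite := by
    have hball : ν (ball 0 δ) ≠ 0 := (measure_ball_pos ν 0 hδ).ne'
    have := ENNReal.lt_top_of_mul_ne_top_left (hcount.trans_lt measure_ball_lt_top).ne hball
    exact Set.encard_ne_top_iff.1 (ENat.toENNReal_ne_top.1 this.ne)
  have hpiece : ∀ u ∈ N, μ (S ∩ f ⁻¹' closedBall u (2 * δ)) ≤ μ (closedBall 0 ρ) := by
    intro u _
    rcases (S ∩ f ⁻¹' closedBall u (2 * δ)).eq_empty_or_nonempty with h | ⟨y, hyS, hyu⟩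
    · simp [h]
    rw [← Measure.addHaar_closedBall_center μ y]
    refine measure_mono fun x ⟨hxS, hxu⟩ => hρ x hxS y hyS ?_
    rw [mem_preimage, mem_closedBall] at hxu hyu
    calc dist (f x) (f y) ≤ dist (f x) u + dist (f y) u := dist_triangle_right _ _ _
      _ ≤ 2 * δ + 2 * δ := by linarith
      _ = 4 * δ := by ring
  have hSN : S ⊆ ⋃ u ∈ N, S ∩ f ⁻¹' closedBall u (2 * δ) := by
    intro x hx
    obtain ⟨u, huN, hxu⟩ := mem_iUnion₂.1 (hcover (mem_image_of_mem f hx))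
    exact mem_biUnion huN ⟨hx, hxu⟩
  have hS : μ S ≤ N.encard * μ (closedBall 0 ρ) :=
    calc μ S ≤ ∑' u : N, μ (S ∩ f ⁻¹' closedBall u (2 * δ)) :=
          (measure_mono hSN).trans (measure_biUnion_le μ hN.countable _)
      _ ≤ ∑' _ : N, μ (closedBall 0 ρ) := ENNReal.tsum_le_tsum fun u => hpiece u u.2
      _ = N.encard * μ (closedBall 0 ρ) := ENNReal.tsum_set_const _ _
  calc μ S * ν (ball 0 δ) ≤ N.encard * μ (closedBall 0 ρ) * ν (ball 0 δ) := by gcongr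
    _ = μ (closedBall 0 ρ) * (N.encard * ν (ball 0 δ)) := by ring
    _ ≤ μ (closedBall 0 ρ) * ν (ball 0 (R + δ)) := by gcongr

end Covering

section Expanding

variable {E F : Type*} [NormedAddCommGroup E] [NormedSpace ℝ E] [FiniteDimensional ℝ E]
  [MeasurableSpace E] [BorelSpace E] (μ : Measure E) [μ.IsAddHaarMeasure]
  [NormedAddCommGroup F] [NormedSpace ℝ F] [FiniteDimensional ℝ F]

lemma measure_mul_measure_ball_one_le_of_mul_dist_rpow_le [MeasurableSpace F] [BorelSpace F]
    (ν : Measure F) [ν.IsAddHaarMeasure] (hE : 0 < finrank ℝ E) (hF : 0 < finrank ℝ F)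
    {S : Set E} {f : E → F} {R K η : ℝ} (hK : 0 < K) (hη : 0 < η)
    (hR : f '' S ⊆ closedBall 0 R)
    (hexp : ∀ x ∈ S, ∀ y ∈ S, dist (f x) (f y) < η →
      K * dist x y ^ ((finrank ℝ E : ℝ) / finrank ℝ F) ≤ dist (f x) (f y)) :
    μ S * ν (ball 0 1) ≤
      ENNReal.ofReal ((4 / K) ^ finrank ℝ F) * μ (ball 0 1) * ν (ball 0 (R + 1)) := by
  set n := finrank ℝ E
  set m := finrank ℝ F
  have hα : (0 : ℝ) < n / m := by positivity
  set δ := min 1 (η / 8)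
  have hδ : 0 < δ := by positivity
  set ρ := (4 * δ / K) ^ ((n : ℝ) / m)⁻¹
  have hρ : ∀ x ∈ S, ∀ y ∈ S, dist (f x) (f y) ≤ 4 * δ → dist x y ≤ ρ := by
    intro x hx y hy hxy
    have := hexp x hx y hy (hxy.trans_lt (by linarith [min_le_right 1 (η / 8)]))
    rw [Real.le_rpow_inv_iff_of_pos dist_nonneg (by positivity) hα, le_div_iff₀' hK]
    linarith
  have hρn : ρ ^ n = δ ^ m * (4 / K) ^ m := by
    have : ((n : ℝ) / m)⁻¹ * n = m := by field_simp
    rw [← mul_pow, ← Real.rpow_natCast, ← Real.rpow_mul (by positivity), this,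
      Real.rpow_natCast]
    ring
  have key := measure_mul_measure_ball_le_of_dist_le μ ν hδ hR hρ
  rw [Measure.addHaar_closedBall μ _ (by positivity), Measure.addHaar_ball_of_pos ν _ hδ, hρn,
    ENNReal.ofReal_mul (by positivity)] at key
  have hδm : ENNReal.ofReal (δ ^ m) ≠ 0 := by simp [hδ]
  refine (ENNReal.mul_le_mul_iff_right hδm ENNReal.ofReal_ne_top).1 ?_
  calc ENNReal.ofReal (δ ^ m) * (μ S * ν (ball 0 1))
      = μ S * (ENNReal.ofReal (δ ^ m) * ν (ball 0 1)) := by ring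
    _ ≤ ENNReal.ofReal (δ ^ m) * ENNReal.ofReal ((4 / K) ^ m) * μ (ball 0 1) *
        ν (ball 0 (R + δ)) := key
    _ ≤ ENNReal.ofReal (δ ^ m) * (ENNReal.ofReal ((4 / K) ^ m) * μ (ball 0 1) *
        ν (ball 0 (R + 1))) := by
      rw [mul_assoc (ENNReal.ofReal (δ ^ m)), mul_assoc (ENNReal.ofReal (δ ^ m))]
      gcongr
      exact min_le_left _ _

lemma measure_mul_measure_ball_one_le_of_subset_expandingSet [MeasurableSpace F] [BorelSpace F]
    (ν : Measure F) [ν.IsAddHaarMeasure] (hE : 0 < finrank ℝ E) (hF : 0 < finrank ℝ F)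
    {D T : Set E} {f : E → F} {r₀ R K : ℝ} (hK : 0 < K)
    (hT₀ : T ⊆ expandingSet D f ((finrank ℝ E : ℝ) / finrank ℝ F) 1 r₀)
    (hTdiam : ∀ x ∈ T, ∀ y ∈ T, dist y x < r₀) (hR : f '' T ⊆ closedBall 0 R)
    (hTK : ∀ x ∈ T, ∃ r > 0, x ∈ expandingSet D f ((finrank ℝ E : ℝ) / finrank ℝ F) K r) :
    μ T * ν (ball 0 1) ≤
      ENNReal.ofReal ((4 / K) ^ finrank ℝ F) * μ (ball 0 1) * ν (ball 0 (R + 1)) := by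
  set α : ℝ := (finrank ℝ E : ℝ) / finrank ℝ F
  have hα : 0 < α := by positivity
  set A : ℕ → Set E := fun l => T ∩ expandingSet D f α K (1 / (l + 1))
  have hA : Monotone A := fun l l' hll' =>
    inter_subset_inter_right _ (expandingSet_anti (Nat.one_div_le_one_div hll'))
  have hTA : T = ⋃ l, A l := by
    refine subset_antisymm (fun x hx => ?_) (iUnion_subset fun l => inter_subset_left)
    obtain ⟨r, hr, hxr⟩ := hTK x hx
    obtain ⟨l, hl⟩ := exists_nat_one_div_lt hr
    exact mem_iUnion.2 ⟨l, hx, expandingSet_anti hl.le hxr⟩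
  rw [hTA, hA.measure_iUnion, ENNReal.iSup_mul]
  refine iSup_le fun l => measure_mul_measure_ball_one_le_of_mul_dist_rpow_le μ ν hE hF hK
    (η := (1 / (l + 1)) ^ α) (by positivity) ((image_mono inter_subset_left).trans hR) ?_
  intro x hx y hy hxy
  exact mul_dist_rpow_le_of_mem_expandingSet hα (by positivity) (hT₀ hy.1) hy.2
    (hT₀ hx.1).1 (hTdiam y hy.1 x hx.1) hxy

lemma measure_eq_zero_of_subset_expandingSet (hE : 0 < finrank ℝ E) (hF : 0 < finrank ℝ F)
    {D T : Set E} {f : E → F} {r₀ R : ℝ}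
    (hT₀ : T ⊆ expandingSet D f ((finrank ℝ E : ℝ) / finrank ℝ F) 1 r₀)
    (hTdiam : ∀ x ∈ T, ∀ y ∈ T, dist y x < r₀) (hR : f '' T ⊆ closedBall 0 R)
    (hTK : ∀ K, ∀ x ∈ T, ∃ r > 0, x ∈ expandingSet D f ((finrank ℝ E : ℝ) / finrank ℝ F) K r) :
    μ T = 0 := by
  let _ : MeasurableSpace F := borel F
  have _ : BorelSpace F := ⟨rfl⟩
  let ν : Measure F := Measure.addHaar
  have hlim : Tendsto (fun K : ℝ => ENNReal.ofReal ((4 / K) ^ finrank ℝ F) * μ (ball 0 1) *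
      ν (ball 0 (R + 1))) atTop (𝓝 0) := by
    have h := ((tendsto_const_nhds (x := (4 : ℝ))).div_atTop tendsto_id).pow (finrank ℝ F)
    rw [zero_pow hF.ne'] at h
    simpa using ENNReal.Tendsto.mul_const (ENNReal.Tendsto.mul_const (ENNReal.tendsto_ofReal h)
      (Or.inr measure_ball_lt_top.ne)) (Or.inr measure_ball_lt_top.ne)
  have hbound : μ T * ν (ball 0 1) ≤ 0 := ge_of_tendsto hlim <|
    (eventually_gt_atTop 0).mono fun K hK =>
      measure_mul_measure_ball_one_le_of_subset_expandingSet μ ν hE hF hK hT₀ hTdiam hR (hTK K)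
  exact (mul_eq_zero.1 (nonpos_iff_eq_zero.1 hbound)).resolve_right
    (measure_ball_pos ν 0 one_pos).ne'

theorem measure_setOf_forall_exists_mem_expandingSet_eq_zero (hE : 0 < finrank ℝ E)
    (hF : 0 < finrank ℝ F) (D : Set E) (f : E → F) :
    μ {x | ∀ K, ∃ r > 0, x ∈ expandingSet D f ((finrank ℝ E : ℝ) / finrank ℝ F) K r} = 0 := by
  set α : ℝ := (finrank ℝ E : ℝ) / finrank ℝ F
  set B := {x | ∀ K, ∃ r > 0, x ∈ expandingSet D f α K r}
  have hB : B ⊆ ⋃ (l : ℕ) (j : ℕ),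
      B ∩ expandingSet D f α 1 (1 / (l + 1)) ∩ f ⁻¹' closedBall 0 j := by
    intro x hx
    obtain ⟨r, hr, hxr⟩ := hx 1
    obtain ⟨l, hl⟩ := exists_nat_one_div_lt hr
    refine mem_iUnion₂.2 ⟨l, ⌈‖f x‖⌉₊, ⟨hx, expandingSet_anti hl.le hxr⟩, ?_⟩
    simpa using Nat.le_ceil ‖f x‖
  refine measure_mono_null hB (measure_iUnion_null fun l => measure_iUnion_null fun j =>
    measure_null_of_locally_null _ fun x _ => ⟨_, inter_mem_nhdsWithin _
      (ball_mem_nhds x (by positivity : (0 : ℝ) < 1 / (l + 1) / 2)), ?_⟩)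
  refine measure_eq_zero_of_subset_expandingSet μ hE hF (fun y hy => hy.1.1.2)
    (fun y hy z hz => ?_) (image_subset_iff.2 fun y hy => hy.1.2)
    (fun K y hy => hy.1.1.1 K)
  have := dist_triangle_right z y x
  linarith [mem_ball.1 hy.2, mem_ball.1 hz.2]

end Expanding

/-- For `m ≥ n ≥ 1`, any `D ⊆ ℝⁿ` and any `f : D → ℝᵐ`, for almost every
`x ∈ D` there exist a subset `C ⊆ D` containing `x` and having `x` as an accumulation point
(`x ∈ closure (C \ {x})`), and a constant `M < ∞`, such that `f` is uniformly `C^{0,α}` on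
`C` with exponent `α = n/m`. -/
theorem uniform_holder_on_subset_ae (n m : ℕ) (hn : 1 ≤ n) (hnm : n ≤ m)
    (D : Set (EuclideanSpace ℝ (Fin n)))
    (f : EuclideanSpace ℝ (Fin n) → EuclideanSpace ℝ (Fin m)) :
    volume {x ∈ D | ¬ ∃ C ⊆ D, x ∈ C ∧ x ∈ closure (C \ {x}) ∧ ∃ M : ℝ,
      ∀ y ∈ C, ∀ y' ∈ C, ‖f y - f y'‖ ≤ M * ‖y - y'‖ ^ ((n : ℝ) / m)} = 0 := by
  have hE : 0 < finrank ℝ (EuclideanSpace ℝ (Fin n)) := by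
    rw [finrank_euclideanSpace_fin]; omega
  have hF : 0 < finrank ℝ (EuclideanSpace ℝ (Fin m)) := by
    rw [finrank_euclideanSpace_fin]; omega
  have hα : (0 : ℝ) < n / m := div_pos (by exact_mod_cast hn) (by exact_mod_cast hn.trans hnm)
  refine measure_mono_null ?_
    (measure_setOf_forall_exists_mem_expandingSet_eq_zero volume hE hF D f)
  rintro x ⟨hxD, hx⟩ K
  simp only [finrank_euclideanSpace_fin]
  by_contra! hK
  obtain ⟨C, hCD, hxC, hxC', M, hM⟩ :=
    exists_holder_subset_of_forall_notMem_expandingSet hα hxD hK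
  refine hx ⟨C, hCD, hxC, hxC', M, fun y hy y' hy' => ?_⟩
  rw [← dist_eq_norm, ← dist_eq_norm]
  exact hM y hy y' hy'
end

section
/- Let D ⊆ ℝ be arbitrary and f : D → ℝ an arbitrary function. Then for almost every x ∈ D there exists a sequence (x_k) ⊆ D \ {x} converging to x such that the limit lim_{k→∞} (f(x_k) − f(x))/(x_k − x) exists and is finite; that is, setting C = {x} ∪ {x_k : k ∈ ℕ}, the restriction f|_C is differentiable at x with finite derivative. -/
/-!
At a point of `D` where the difference quotients of `f` along `D` do not tend to infinity, some
sequence of them stays bounded and a subsequence converges. So the exceptional points lie in the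
set `S` of `x ∈ D` with `y - x = o(f y - f x)` as `y → x` in `D`. Near each of its points `S`
splits into pieces on which `f` is expanding, hence injective with a Lipschitz inverse `g`; the
blow-up of the quotients says that `g` has derivative `0` along `f '' S`, and the Sard-type bound
`addHaar_image_eq_zero_of_det_fderivWithin_eq_zero` shows that each piece `g '' (f '' piece)` is
null.
-/

open MeasureTheory Filter Topology Asymptotics Function Metric Set

section

variable {E : Type*} [NormedAddCommGroup E] [NormedSpace ℝ E] [FiniteDimensional ℝ E]
  [MeasurableSpace E] [BorelSpace E] (μ : Measure E) [μ.IsAddHaarMeasure] {f : E → E} {s : Set E}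

theorem addHaar_eq_zero_of_isLittleO_of_antilipschitzOn [Nontrivial E] {K : NNReal}
    (hK : ∀ x ∈ s, ∀ y ∈ s, dist x y ≤ K * dist (f x) (f y))
    (hf : ∀ x ∈ s, (fun y => y - x) =o[𝓝[s] x] (fun y => f y - f x)) : μ s = 0 := by
  have hinj : InjOn f s := fun x hx y hy hxy =>
    dist_le_zero.1 (by simpa [hxy] using hK x hx y hy)
  set g := invFunOn f s
  have hgf : ∀ x ∈ s, g (f x) = x := hinj.leftInvOn_invFunOn
  have hfg : ∀ v ∈ f '' s, f (g v) = v := fun v hv => invFunOn_eq hv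
  have hg_lip : LipschitzOnWith K g (f '' s) := by
    refine LipschitzOnWith.of_dist_le_mul ?_
    rintro _ ⟨x, hx, rfl⟩ _ ⟨y, hy, rfl⟩
    simpa only [hgf x hx, hgf y hy] using hK x hx y hy
  have hg_deriv : ∀ v ∈ f '' s, HasFDerivWithinAt g (0 : E →L[ℝ] E) (f '' s) v := by
    rintro _ ⟨x, hx, rfl⟩
    have hg_tendsto : Tendsto g (𝓝[f '' s] (f x)) (𝓝[s] x) := by
      refine tendsto_nhdsWithin_iff.2 ⟨?_, eventually_mem_nhdsWithin.mono fun v hv => ?_⟩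
      · simpa [hgf x hx] using (hg_lip.continuousOn _ (mem_image_of_mem f hx)).tendsto
      · obtain ⟨y, hy, rfl⟩ := hv
        simpa [hgf y hy] using hy
    refine HasFDerivWithinAt.of_isLittleO <| ((hf x hx).comp_tendsto hg_tendsto).congr'
      (Eventually.of_forall fun v => by simp [hgf x hx])
      (eventually_mem_nhdsWithin.mono fun v hv => by simp [hfg v hv])
  rw [← hinj.invFunOn_image subset_rfl]
  exact addHaar_image_eq_zero_of_det_fderivWithin_eq_zero μ hg_deriv fun _ _ => by
    simp [ContinuousLinearMap.det]

theorem addHaar_eq_zero_of_isLittleO [Nontrivial E]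
    (hf : ∀ x ∈ s, (fun y => y - x) =o[𝓝[s] x] (fun y => f y - f x)) : μ s = 0 := by
  set t : ℕ → Set E := fun n =>
    {x ∈ s | ∀ y ∈ s, dist y x < 1 / (n + 1) → dist y x ≤ dist (f y) (f x)}
  have hst : s ⊆ ⋃ n, t n := by
    intro x hx
    obtain ⟨ε, hε, hball⟩ := Metric.mem_nhdsWithin_iff.1 (hf x hx).eventuallyLE
    obtain ⟨n, hn⟩ := exists_nat_one_div_lt hε
    refine mem_iUnion.2 ⟨n, hx, fun y hy hyx => ?_⟩
    simpa [dist_eq_norm] using hball ⟨hyx.trans hn, hy⟩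
  refine measure_mono_null hst <| measure_iUnion_null fun n => ?_
  refine measure_null_of_locally_null _ fun x hx => ⟨t n ∩ ball x (1 / (n + 1) / 2),
    inter_mem_nhdsWithin _ (ball_mem_nhds _ (by positivity)), ?_⟩
  refine addHaar_eq_zero_of_isLittleO_of_antilipschitzOn μ (K := 1) (fun y hy z hz => ?_)
    fun y hy => (hf y hy.1.1).mono (nhdsWithin_mono _ fun z hz => hz.1.1)
  have hyz : dist z y < 1 / (n + 1) :=
    calc dist z y ≤ dist z x + dist y x := dist_triangle_right z y x
      _ < 1 / (n + 1) / 2 + 1 / (n + 1) / 2 := add_lt_add hz.2 hy.2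
      _ = 1 / (n + 1) := add_halves _
  simpa [dist_comm] using hy.1.2 z hz.1.1 hyz

end

lemma exists_seq_tendsto_slope_of_not_isLittleO {D : Set ℝ} {f : ℝ → ℝ} {x : ℝ}
    (h : ¬ (fun y => y - x) =o[𝓝[D] x] (fun y => f y - f x)) :
    ∃ x_k : ℕ → ℝ, (∀ k, x_k k ∈ D \ {x}) ∧ Tendsto x_k atTop (𝓝 x) ∧
      ∃ L : ℝ, Tendsto (fun k => (f (x_k k) - f x) / (x_k k - x)) atTop (𝓝 L) := by
  obtain ⟨c, hc, hfreq⟩ : ∃ c > 0, ∃ᶠ y in 𝓝[D] x, c * ‖f y - f x‖ < ‖y - x‖ := by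
    simpa [isLittleO_iff] using h
  have hbounded : ∃ᶠ y in 𝓝[D] x,
      y ∈ D \ {x} ∧ (f y - f x) / (y - x) ∈ closedBall 0 c⁻¹ := by
    refine (hfreq.and_eventually self_mem_nhdsWithin).mono fun y ⟨hlt, hy⟩ => ?_
    have hyx : y ≠ x := by
      rintro rfl
      simp at hlt
    refine ⟨⟨hy, hyx⟩, ?_⟩
    rw [mem_closedBall_zero_iff, norm_div, div_le_iff₀ (norm_pos_iff.2 (sub_ne_zero.2 hyx)),
      inv_mul_eq_div, le_div_iff₀ hc, mul_comm]
    exact hlt.le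
  obtain ⟨y, hy_tendsto, hy⟩ := frequently_iff_seq_forall.1 hbounded
  obtain ⟨L, -, φ, hφ, hL⟩ := (isCompact_closedBall (0 : ℝ) c⁻¹).tendsto_subseq fun k => (hy k).2
  exact ⟨y ∘ φ, fun k => (hy _).1,
    (tendsto_nhds_of_tendsto_nhdsWithin hy_tendsto).comp hφ.tendsto_atTop, L, hL⟩

/-- For any `D ⊆ ℝ` and any `f : D → ℝ`, for almost every `x ∈ D` there is
a sequence `(x_k) ⊆ D \ {x}` converging to `x` such that the difference quotients
`(f(x_k) - f(x)) / (x_k - x)` converge to a finite limit; i.e. with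
`C = {x} ∪ {x_k : k ∈ ℕ}`, the restriction `f|_C` is differentiable at `x`
with finite derivative. -/
theorem differentiable_along_sequence_ae (D : Set ℝ) (f : ℝ → ℝ) :
    volume {x ∈ D | ¬ ∃ x_k : ℕ → ℝ, (∀ k, x_k k ∈ D \ {x}) ∧
      Tendsto x_k atTop (𝓝 x) ∧
      ∃ L : ℝ, Tendsto (fun k => (f (x_k k) - f x) / (x_k k - x)) atTop (𝓝 L)} = 0 := by
  set S := {x ∈ D | (fun y => y - x) =o[𝓝[D] x] (fun y => f y - f x)}
  have hS : volume S = 0 := addHaar_eq_zero_of_isLittleO volume fun x hx =>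
    hx.2.mono (nhdsWithin_mono _ fun y hy => hy.1)
  refine measure_mono_null (fun x hx => ?_) hS
  refine ⟨hx.1, not_not.1 fun h => hx.2 ?_⟩
  exact exists_seq_tendsto_slope_of_not_isLittleO h
end

section
/- Let n, m ≥ 1 be integers and let α > n/m be a real number. Then there exists a function f : [0,∞)^n → [0,∞)^m such that for every x ∈ [0,∞)^n, the quotient |f(x) − f(y)| / |x − y|^α tends to infinity as y → x with y ∈ [0,∞)^n, y ≠ x. In particular, for every x ∈ [0,∞)^n and every sequence (x_k) ⊆ [0,∞)^n \ {x} converging to x, limsup_{k→∞} |f(x) − f(x_k)| / |x − x_k|^α = ∞, so f is not C^{0,α} at x even after restriction to any sequence converging to x. Hence the Hölder exponent α = n/m in the restriction theorem cannot be improved. -/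
/-!
Send `x` to the fractional parts of its coordinates, interleave their binary digits into a
single stream, deal that stream out round-robin to the `m` output coordinates, and read the
digits of each output as a power series in a ratio `r < 1/2`. Because `r < 1/2`, the first
term where two such series differ outweighs their whole tail. So if the streams of `x` and `y`
first differ at position `S`, some output coordinate moves by `≳ r ^ (S / m)`, while the
inputs agree to within `2 ^ (-S / n)`. With `r = 2 ^ (-β m / n)` for `n / m < β < α` this
gives `‖f x - f y‖ ≳ ‖x - y‖ ^ β` near every point, and `‖x - y‖ ^ β` beats
`‖x - y‖ ^ α`.
-/

open Filter Topology

lemma mul_pow_le_abs_tsum_mul_pow {r : ℝ} (hr₀ : 0 ≤ r) (hr : r < 1 / 2) {a : ℕ → ℝ} {K : ℕ}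
    (ha : ∀ k, |a k| ≤ 1) (ha_lt : ∀ k < K, a k = 0) (ha_K : |a K| = 1) :
    (1 - 2 * r) / (1 - r) * r ^ K ≤ |∑' k, a k * r ^ k| := by
  have hr₁ : r < 1 := by linarith
  have hterm : ∀ k, ‖a k * r ^ k‖ ≤ r ^ k := fun k => by
    rw [norm_mul, norm_pow, Real.norm_eq_abs, Real.norm_eq_abs, abs_of_nonneg hr₀]
    exact mul_le_of_le_one_left (by positivity) (ha k)
  have hsum : Summable (fun k => a k * r ^ k) :=
    (summable_geometric_of_lt_one hr₀ hr₁).of_norm_bounded hterm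
  have hhead : ∑ k ∈ Finset.range (K + 1), a k * r ^ k = a K * r ^ K := by
    rw [Finset.sum_range_succ, Finset.sum_eq_zero fun k hk => by
      rw [ha_lt k (Finset.mem_range.1 hk), zero_mul], zero_add]
  have htail : |∑' k, a (k + (K + 1)) * r ^ (k + (K + 1))| ≤ r ^ (K + 1) * (1 - r)⁻¹ :=
    tsum_of_norm_bounded ((hasSum_geometric_of_lt_one hr₀ hr₁).mul_left (r ^ (K + 1)))
      fun k => (hterm _).trans_eq (by ring)
  rw [← hsum.sum_add_tsum_nat_add (K + 1), hhead]
  calc (1 - 2 * r) / (1 - r) * r ^ K = |a K * r ^ K| - r ^ (K + 1) * (1 - r)⁻¹ := by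
        rw [abs_mul, ha_K, abs_of_nonneg (by positivity)]
        field_simp [(by linarith : 1 - r ≠ 0)]
        ring
    _ ≤ _ := (sub_le_sub_left htail _).trans (abs_sub_abs_le_abs_add _ _)

lemma abs_finTwo_sub_le (d e : Fin 2) : |(d : ℝ) - e| ≤ 1 := by
  fin_cases d <;> fin_cases e <;> norm_num

lemma abs_finTwo_sub_of_ne {d e : Fin 2} (h : d ≠ e) : |(d : ℝ) - e| = 1 := by
  fin_cases d <;> fin_cases e <;> simp_all

section Digits

variable {n : ℕ} [NeZero n]

noncomputable def interleavedDigits (u : Fin n → ℝ) (s : ℕ) : Fin 2 :=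
  Real.digits (u (Fin.ofNat n s)) 2 (s / n)

lemma interleavedDigits_mul_add (u : Fin n → ℝ) (p : ℕ) (i : Fin n) :
    interleavedDigits u (p * n + i) = Real.digits (u i) 2 p := by
  have hn := NeZero.pos n
  have hi : Fin.ofNat n (p * n + i) = i := by
    ext
    rw [Fin.val_ofNat, Nat.mul_add_mod_self_right, Nat.mod_eq_of_lt i.isLt]
  rw [interleavedDigits, hi, Nat.add_comm, Nat.add_mul_div_right _ _ hn,
    Nat.div_eq_of_lt i.isLt, zero_add]

lemma exists_interleavedDigits_ne {u v : Fin n → ℝ} (hu : ∀ i, u i ∈ Set.Ico 0 1)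
    (hv : ∀ i, v i ∈ Set.Ico 0 1) (huv : u ≠ v) :
    ∃ s, interleavedDigits u s ≠ interleavedDigits v s := by
  by_contra! h
  refine huv (funext fun i => ?_)
  rw [← Real.ofDigits_digits one_lt_two (hu i), ← Real.ofDigits_digits one_lt_two (hv i)]
  congr 1
  funext p
  simpa only [interleavedDigits_mul_add] using h (p * n + i)

lemma abs_sub_le_of_interleavedDigits_eq {u v : Fin n → ℝ} (hu : ∀ i, u i ∈ Set.Ico 0 1)
    (hv : ∀ i, v i ∈ Set.Ico 0 1) {S : ℕ}
    (h : ∀ s < S, interleavedDigits u s = interleavedDigits v s) (i : Fin n) :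
    |u i - v i| ≤ (2⁻¹ : ℝ) ^ (S / n) := by
  rw [← Real.ofDigits_digits one_lt_two (hu i), ← Real.ofDigits_digits one_lt_two (hv i)]
  refine (Real.abs_ofDigits_sub_ofDigits_le (n := S / n) fun p hp => ?_).trans_eq (by simp)
  rw [← interleavedDigits_mul_add, ← interleavedDigits_mul_add]
  refine h _ ?_
  have h₁ := Nat.mul_le_mul_right n (Nat.succ_le_of_lt hp)
  have h₂ := Nat.div_mul_le_self S n
  have h₃ := i.isLt
  rw [Nat.succ_mul] at h₁
  omega

end Digits

section Spread

variable {n : ℕ} [NeZero n] (m : ℕ)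

noncomputable def spreadDigits (r : ℝ) (u : Fin n → ℝ) (j : Fin m) : ℝ :=
  ∑' k, (interleavedDigits u (k * m + j) : ℝ) * r ^ k

variable {m}

lemma spreadDigits_nonneg {r : ℝ} (hr : 0 ≤ r) (u : Fin n → ℝ) (j : Fin m) :
    0 ≤ spreadDigits m r u j :=
  tsum_nonneg fun _ => by positivity

lemma summable_spreadDigits {r : ℝ} (hr₀ : 0 ≤ r) (hr₁ : r < 1) (u : Fin n → ℝ) (j : Fin m) :
    Summable fun k => (interleavedDigits u (k * m + j) : ℝ) * r ^ k :=
  (summable_geometric_of_lt_one hr₀ hr₁).of_nonneg_of_le (fun _ => by positivity) fun k =>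
    mul_le_of_le_one_left (by positivity) (by exact_mod_cast Nat.le_of_lt_succ (Fin.isLt _))

lemma mul_pow_le_abs_spreadDigits_sub [NeZero m] {r : ℝ} (hr₀ : 0 ≤ r) (hr : r < 1 / 2)
    {u v : Fin n → ℝ} {S : ℕ} (h_lt : ∀ s < S, interleavedDigits u s = interleavedDigits v s)
    (h_S : interleavedDigits u S ≠ interleavedDigits v S) :
    (1 - 2 * r) / (1 - r) * r ^ (S / m) ≤
      |spreadDigits m r u (Fin.ofNat m S) - spreadDigits m r v (Fin.ofNat m S)| := by
  have hS : S / m * m + S % m = S := Nat.div_add_mod' S m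
  have hr₁ : r < 1 := by linarith
  rw [spreadDigits, spreadDigits, ← (summable_spreadDigits hr₀ hr₁ u _).tsum_sub
    (summable_spreadDigits hr₀ hr₁ v _)]
  simp_rw [← sub_mul, Fin.val_ofNat]
  refine mul_pow_le_abs_tsum_mul_pow hr₀ hr (fun k => abs_finTwo_sub_le _ _) (fun k hk => ?_)
    (abs_finTwo_sub_of_ne (by rwa [hS]))
  have hk' : k * m + S % m < S :=
    (Nat.add_lt_add_right (Nat.mul_lt_mul_of_pos_right hk (NeZero.pos m)) _).trans_eq hS
  rw [h_lt _ hk', sub_self]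

end Spread

/-- Chosen so that `spreadRatio n m β ^ (S / m) ≈ 2 ^ (-β * S / n)`. -/
noncomputable def spreadRatio (n m : ℕ) (β : ℝ) : ℝ := (2⁻¹ : ℝ) ^ (β * m / n)

lemma spreadRatio_pos (n m : ℕ) (β : ℝ) : 0 < spreadRatio n m β := by
  unfold spreadRatio
  positivity

section ReverseHolder

variable {n m : ℕ}

lemma spreadRatio_lt_half [NeZero n] [NeZero m] {β : ℝ} (hβ : (n : ℝ) / m < β) :
    spreadRatio n m β < 1 / 2 := by
  have hn : (0 : ℝ) < n := Nat.cast_pos.2 (NeZero.pos n)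
  have hm : (0 : ℝ) < m := Nat.cast_pos.2 (NeZero.pos m)
  have h₁ : 1 < β * m / n := by
    rw [one_lt_div hn]
    rwa [div_lt_iff₀ hm] at hβ
  calc spreadRatio n m β < (2⁻¹ : ℝ) ^ (1 : ℝ) :=
        (Real.rpow_lt_rpow_left_iff_of_base_lt_one (by norm_num) (by norm_num)).2 h₁
    _ = 1 / 2 := by norm_num

lemma half_rpow_le_spreadRatio_pow [NeZero n] [NeZero m] {β a : ℝ} (hβ : 0 ≤ β) (ha₀ : 0 ≤ a)
    {S : ℕ} (ha : a ≤ (2⁻¹ : ℝ) ^ (S / n)) :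
    (a / 2) ^ β ≤ spreadRatio n m β ^ (S / m) := by
  have hn : (0 : ℝ) < n := Nat.cast_pos.2 (NeZero.pos n)
  have hm : (0 : ℝ) < m := Nat.cast_pos.2 (NeZero.pos m)
  have hS : (S : ℝ) / n ≤ ((S / n : ℕ) : ℝ) + 1 := by
    rw [← Nat.floor_div_eq_div (K := ℝ)]
    exact (Nat.lt_floor_add_one _).le
  have ha' : a / 2 ≤ (2⁻¹ : ℝ) ^ ((S : ℝ) / n) :=
    calc a / 2 ≤ (2⁻¹ : ℝ) ^ (S / n) * 2⁻¹ := by linarith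
      _ = (2⁻¹ : ℝ) ^ (((S / n : ℕ) : ℝ) + 1) := by
        rw [Real.rpow_add_one (by norm_num), Real.rpow_natCast]
      _ ≤ (2⁻¹ : ℝ) ^ ((S : ℝ) / n) :=
        Real.rpow_le_rpow_of_exponent_ge (by norm_num) (by norm_num) hS
  calc (a / 2) ^ β ≤ ((2⁻¹ : ℝ) ^ ((S : ℝ) / n)) ^ β := Real.rpow_le_rpow (by positivity) ha' hβ
    _ = (2⁻¹ : ℝ) ^ (β * m / n * ((S : ℝ) / m)) := by
      rw [← Real.rpow_mul (by norm_num)]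
      congr 1
      field_simp
    _ ≤ (2⁻¹ : ℝ) ^ (β * m / n * ((S / m : ℕ) : ℝ)) :=
      Real.rpow_le_rpow_of_exponent_ge (by norm_num) (by norm_num)
        (mul_le_mul_of_nonneg_left Nat.cast_div_le (by positivity))
    _ = spreadRatio n m β ^ (S / m) := by
      rw [Real.rpow_mul (by norm_num), Real.rpow_natCast, spreadRatio]

theorem mul_rpow_le_norm_spreadDigits_sub [NeZero n] [NeZero m] {β : ℝ} (hβ : (n : ℝ) / m < β)
    {u v : Fin n → ℝ} (hu : ∀ i, u i ∈ Set.Ico 0 1) (hv : ∀ i, v i ∈ Set.Ico 0 1) :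
    (1 - 2 * spreadRatio n m β) / (1 - spreadRatio n m β) * (‖u - v‖ / 2) ^ β ≤
      ‖spreadDigits m (spreadRatio n m β) u - spreadDigits m (spreadRatio n m β) v‖ := by
  set r := spreadRatio n m β
  have hr₀ : 0 ≤ r := (spreadRatio_pos n m β).le
  have hr : r < 1 / 2 := spreadRatio_lt_half hβ
  have hβ₀ : 0 < β := lt_of_le_of_lt (by positivity) hβ
  obtain rfl | huv := eq_or_ne u v
  · simp [Real.zero_rpow hβ₀.ne']
  classical
  have hex := exists_interleavedDigits_ne hu hv huv
  have h_lt : ∀ s < Nat.find hex, interleavedDigits u s = interleavedDigits v s :=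
    fun s hs => not_not.1 (Nat.find_min hex hs)
  have hnorm : ‖u - v‖ ≤ (2⁻¹ : ℝ) ^ (Nat.find hex / n) :=
    (pi_norm_le_iff_of_nonneg (by positivity)).2 fun i =>
      abs_sub_le_of_interleavedDigits_eq hu hv h_lt i
  calc (1 - 2 * r) / (1 - r) * (‖u - v‖ / 2) ^ β
      ≤ (1 - 2 * r) / (1 - r) * r ^ (Nat.find hex / m) := by
        gcongr
        · exact div_nonneg (by linarith) (by linarith)
        · exact half_rpow_le_spreadRatio_pow hβ₀.le (norm_nonneg _) hnorm
    _ ≤ |spreadDigits m r u (Fin.ofNat m (Nat.find hex)) -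
          spreadDigits m r v (Fin.ofNat m (Nat.find hex))| :=
      mul_pow_le_abs_spreadDigits_sub hr₀ hr h_lt (Nat.find_spec hex)
    _ ≤ ‖spreadDigits m r u - spreadDigits m r v‖ :=
      norm_le_pi_norm (spreadDigits m r u - spreadDigits m r v) _

end ReverseHolder

lemma abs_sub_le_abs_fract_sub {a b : ℝ} (h : |a - b| ≤ 1 / 2) :
    |a - b| ≤ |Int.fract a - Int.fract b| := by
  rw [Int.fract, Int.fract,
    show a - ⌊a⌋ - (b - ⌊b⌋) = (a - b) - ((⌊a⌋ - ⌊b⌋ : ℤ) : ℝ) by push_cast; ring]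
  obtain hk | hk := eq_or_ne (⌊a⌋ - ⌊b⌋) 0
  · rw [hk, Int.cast_zero, sub_zero]
  · have h₁ : (1 : ℝ) ≤ |((⌊a⌋ - ⌊b⌋ : ℤ) : ℝ)| := by exact_mod_cast Int.one_le_abs hk
    have h₂ := abs_sub_abs_le_abs_sub (((⌊a⌋ - ⌊b⌋ : ℤ) : ℝ)) (a - b)
    rw [abs_sub_comm _ (a - b)] at h₂
    linarith

lemma norm_sub_le_norm_fract_sub {ι : Type*} [Fintype ι] {u v : ι → ℝ} (h : ‖u - v‖ ≤ 1 / 2) :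
    ‖u - v‖ ≤ ‖(fun i => Int.fract (u i)) - fun i => Int.fract (v i)‖ :=
  (pi_norm_le_iff_of_nonneg (norm_nonneg _)).2 fun i =>
    (abs_sub_le_abs_fract_sub ((norm_le_pi_norm (u - v) i).trans h)).trans
      (norm_le_pi_norm ((fun i => Int.fract (u i)) - fun i => Int.fract (v i)) i)

lemma tendsto_norm_sub_div_rpow_atTop {E F : Type*} [NormedAddCommGroup E]
    [SeminormedAddCommGroup F] {f : E → F} {x : E} {C β α : ℝ} (hC : 0 < C) (hβα : β < α)
    (hf : ∀ᶠ y in 𝓝[≠] x, C * ‖x - y‖ ^ β ≤ ‖f x - f y‖) :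
    Tendsto (fun y => ‖f x - f y‖ / ‖x - y‖ ^ α) (𝓝[≠] x) atTop := by
  have h₀ : Tendsto (fun y => ‖x - y‖) (𝓝[≠] x) (𝓝[>] 0) := by
    simpa only [norm_sub_rev] using tendsto_norm_sub_self_nhdsNE x
  have h₁ : Tendsto (fun t : ℝ => C * t ^ (β - α)) (𝓝[>] 0) atTop :=
    (tendsto_rpow_neg_nhdsGT_zero (by linarith)).const_mul_atTop hC
  refine tendsto_atTop_mono' _ ?_ (h₁.comp h₀)
  filter_upwards [hf, self_mem_nhdsWithin] with y hy hyx
  have hpos : 0 < ‖x - y‖ := norm_pos_iff.2 (sub_ne_zero.2 (Ne.symm hyx))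
  rw [Function.comp_apply, Real.rpow_sub hpos, ← mul_div_assoc]
  exact div_le_div_of_nonneg_right hy (Real.rpow_nonneg hpos.le α)

noncomputable def digitSpreadMap {n : ℕ} [NeZero n] (m : ℕ) (β : ℝ)
    (x : EuclideanSpace ℝ (Fin n)) : EuclideanSpace ℝ (Fin m) :=
  WithLp.toLp 2 (spreadDigits m (spreadRatio n m β) fun i => Int.fract (x i))

lemma exists_mul_rpow_le_norm_digitSpreadMap_sub {n m : ℕ} [NeZero n] [NeZero m] {β : ℝ}
    (hβ : (n : ℝ) / m < β) :
    ∃ C > 0, ∀ x y : EuclideanSpace ℝ (Fin n), ‖x - y‖ ≤ 1 / 2 →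
      C * ‖x - y‖ ^ β ≤ ‖digitSpreadMap m β x - digitSpreadMap m β y‖ := by
  set r := spreadRatio n m β
  have hβ₀ : 0 < β := lt_of_le_of_lt (by positivity) hβ
  have hδ : 0 < (1 - 2 * r) / (1 - r) := by
    have := spreadRatio_lt_half hβ
    exact div_pos (by linarith) (by linarith)
  obtain ⟨K, hK⟩ : ∃ K : NNReal, AntilipschitzWith K (WithLp.ofLp (p := 2) (V := Fin n → ℝ)) :=
    ⟨_, PiLp.antilipschitzWith_ofLp 2 _⟩
  refine ⟨(1 - 2 * r) / (1 - r) * (2 * ((K : ℝ) + 1))⁻¹ ^ β, by positivity, fun x y hxy => ?_⟩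
  have h_sup : ‖x - y‖ ≤ (K + 1) * ‖WithLp.ofLp x - WithLp.ofLp y‖ := by
    have := hK.le_mul_dist x y
    rw [dist_eq_norm, dist_eq_norm] at this
    nlinarith [norm_nonneg (WithLp.ofLp x - WithLp.ofLp y)]
  have h_sup' : ‖WithLp.ofLp x - WithLp.ofLp y‖ ≤ ‖x - y‖ := by
    simpa [dist_eq_norm] using (PiLp.lipschitzWith_ofLp 2 _).dist_le_mul x y
  have h_coord : ∀ z : EuclideanSpace ℝ (Fin n), ∀ i, Int.fract (z i) ∈ Set.Ico 0 1 :=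
    fun z i => ⟨Int.fract_nonneg _, Int.fract_lt_one _⟩
  have h_scale : ‖x - y‖ / (2 * (K + 1)) ≤ ‖WithLp.ofLp x - WithLp.ofLp y‖ / 2 := by
    rw [div_le_div_iff₀ (by positivity) two_pos]
    nlinarith
  calc (1 - 2 * r) / (1 - r) * (2 * ((K : ℝ) + 1))⁻¹ ^ β * ‖x - y‖ ^ β
      = (1 - 2 * r) / (1 - r) * (‖x - y‖ / (2 * (K + 1))) ^ β := by
        rw [div_eq_inv_mul ‖x - y‖, Real.mul_rpow (by positivity) (norm_nonneg _), mul_assoc]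
    _ ≤ (1 - 2 * r) / (1 - r) * (‖WithLp.ofLp x - WithLp.ofLp y‖ / 2) ^ β := by gcongr
    _ ≤ (1 - 2 * r) / (1 - r) *
          (‖(fun i => Int.fract (x i)) - fun i => Int.fract (y i)‖ / 2) ^ β := by
        gcongr
        exact norm_sub_le_norm_fract_sub (h_sup'.trans hxy)
    _ ≤ ‖spreadDigits m r (fun i => Int.fract (x i)) -
          spreadDigits m r fun i => Int.fract (y i)‖ :=
      mul_rpow_le_norm_spreadDigits_sub hβ (h_coord x) (h_coord y)
    _ ≤ ‖digitSpreadMap m β x - digitSpreadMap m β y‖ := by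
      simpa [dist_eq_norm, digitSpreadMap] using
        (PiLp.lipschitzWith_ofLp 2 _).dist_le_mul (digitSpreadMap m β x) (digitSpreadMap m β y)

/-- Sharpness of the Hölder exponent: for `n, m ≥ 1` and any real
`α > n/m` there is a function `f : [0,∞)ⁿ → [0,∞)ᵐ` such that for every `x ∈ [0,∞)ⁿ` the
quotient `|f(x) - f(y)| / |x - y|^α` tends to infinity as `y → x` within `[0,∞)ⁿ \ {x}`.
In particular, along every sequence `(x_k) ⊆ [0,∞)ⁿ \ {x}` converging to `x` the
corresponding limsup is `∞`, so `f` is not `C^{0,α}` at `x` after restriction to any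
sequence converging to `x`. -/
theorem holder_exponent_sharp (n m : ℕ) (hn : 1 ≤ n) (hm : 1 ≤ m)
    (α : ℝ) (hα : (n : ℝ) / m < α) :
    ∃ f : EuclideanSpace ℝ (Fin n) → EuclideanSpace ℝ (Fin m),
      (∀ x ∈ {y : EuclideanSpace ℝ (Fin n) | ∀ i, 0 ≤ y i},
        f x ∈ {z : EuclideanSpace ℝ (Fin m) | ∀ i, 0 ≤ z i}) ∧
      (∀ x ∈ {y : EuclideanSpace ℝ (Fin n) | ∀ i, 0 ≤ y i},
        Tendsto (fun y => ‖f x - f y‖ / ‖x - y‖ ^ α)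
          (𝓝[{y : EuclideanSpace ℝ (Fin n) | ∀ i, 0 ≤ y i} \ {x}] x) atTop) ∧
      (∀ x ∈ {y : EuclideanSpace ℝ (Fin n) | ∀ i, 0 ≤ y i},
        ∀ x_k : ℕ → EuclideanSpace ℝ (Fin n),
          (∀ k, x_k k ∈ {y : EuclideanSpace ℝ (Fin n) | ∀ i, 0 ≤ y i} \ {x}) →
          Tendsto x_k atTop (𝓝 x) →
          Filter.limsup (fun k =>
            ENNReal.ofReal (‖f x - f (x_k k)‖ / ‖x - x_k k‖ ^ α)) atTop = ⊤) := by
  have : NeZero n := ⟨by omega⟩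
  have : NeZero m := ⟨by omega⟩
  obtain ⟨β, hβ, hβα⟩ := exists_between hα
  obtain ⟨C, hC, hf⟩ := exists_mul_rpow_le_norm_digitSpreadMap_sub hβ
  have h_tendsto : ∀ x : EuclideanSpace ℝ (Fin n),
      Tendsto (fun y => ‖digitSpreadMap m β x - digitSpreadMap m β y‖ / ‖x - y‖ ^ α)
        (𝓝[≠] x) atTop := by
    intro x
    refine tendsto_norm_sub_div_rpow_atTop hC hβα (nhdsWithin_le_nhds ?_)
    filter_upwards [Metric.closedBall_mem_nhds x one_half_pos] with y hy
    rw [Metric.mem_closedBall, dist_comm, dist_eq_norm] at hy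
    exact hf x y hy
  refine ⟨digitSpreadMap m β, fun x _ i => spreadDigits_nonneg (spreadRatio_pos n m β).le _ i,
    fun x _ => (h_tendsto x).mono_left (nhdsWithin_mono x (Set.sdiff_subset_compl _ _)), ?_⟩
  intro x _ x_k hx_k hlim
  have : Tendsto x_k atTop (𝓝[≠] x) :=
    tendsto_nhdsWithin_iff.2 ⟨hlim, Eventually.of_forall fun k => (hx_k k).2⟩
  exact (ENNReal.tendsto_ofReal_atTop.comp ((h_tendsto x).comp this)).limsup_eq
end

section
/- Let n, m ≥ 1, α ∈ (0,1], M ∈ [0,∞), let x ∈ ℝ^n, let (x_k) be a sequence in ℝ^n \ {x} converging to x, and let f be a function defined on {x} ∪ {x_k : k ∈ ℕ} with values in ℝ^m satisfying |f(x) − f(x_k)| ≤ M·|x − x_k|^α for all k. Then for every ε > 0 there exists a subsequence (x'_k) of (x_k), with pairwise distinct terms, such that f is uniformly C^{0,α} on C = {x} ∪ {x'_k : k ∈ ℕ} with constant (2^α + 1 + ε)·M, i.e. |f(y) − f(y')| ≤ (2^α + 1 + ε)·M·|y − y'|^α for all y, y' ∈ C. -/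
/-!
Pass to a subsequence along which the distances `r_i = |x - x'_i|` decay geometrically,
`r_j ≤ δ r_i` for `i < j`. Then for `i < j` the two points are well separated,
`|x'_i - x'_j| ≥ (1 - δ) r_i`, while the triangle inequality through `f(x)` gives
`|f(x'_i) - f(x'_j)| ≤ M (r_i^α + r_j^α) ≤ M (1 + δ^α) r_i^α`. Since
`(1 + δ^α) / (1 - δ)^α → 1` as `δ → 0`, any constant `C > 1` in front of `M` is reached,
in particular `2^α + 1 + ε`.
-/

open Filter Topology Set Function

theorem exists_pos_lt_one_one_add_rpow_le_mul {C α : ℝ} (hC : 1 < C) (hα : 0 < α) :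
    ∃ δ, 0 < δ ∧ δ < 1 ∧ 1 + δ ^ α ≤ C * (1 - δ) ^ α := by
  have hcont : ContinuousAt (fun δ : ℝ => C * (1 - δ) ^ α - (1 + δ ^ α)) 0 := by
    refine ContinuousAt.sub (continuousAt_const.mul ?_)
      (continuousAt_const.add (Real.continuousAt_rpow_const 0 α (Or.inr hα.le)))
    exact (Real.continuousAt_rpow_const _ α (Or.inl (by norm_num))).comp
      (continuousAt_const.sub continuousAt_id)
  have hpos : 0 < C * (1 - 0) ^ α - (1 + (0 : ℝ) ^ α) := by
    rw [sub_zero, Real.one_rpow, Real.zero_rpow hα.ne']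
    linarith
  have hev : ∀ᶠ δ in 𝓝[>] 0, 0 < C * (1 - δ) ^ α - (1 + δ ^ α) :=
    nhdsWithin_le_nhds (hcont.eventually (lt_mem_nhds hpos))
  obtain ⟨δ, hδ, hδ0, hδ1⟩ := (hev.and (Ioo_mem_nhdsGT one_pos)).exists
  exact ⟨δ, hδ0, hδ1, by linarith⟩

theorem exists_strictMono_dist_le_mul_of_tendsto {X : Type*} [MetricSpace X] {u : ℕ → X}
    {x : X} (hu : Tendsto u atTop (𝓝 x)) (hne : ∀ k, u k ≠ x) {δ : ℝ} (hδ : 0 < δ) :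
    ∃ φ : ℕ → ℕ, StrictMono φ ∧
      ∀ i j, i < j → dist (u (φ j)) x ≤ δ * dist (u (φ i)) x := by
  obtain ⟨φ, -, hφ⟩ := exists_seq_of_forall_finset_exists (fun _ : ℕ => True)
    (fun k l => k < l ∧ dist (u l) x ≤ δ * dist (u k) x) fun s _ => by
      have hclose : ∀ k ∈ s, ∀ᶠ l in atTop, k < l ∧ dist (u l) x ≤ δ * dist (u k) x :=
        fun k _ => (eventually_gt_atTop k).and <| (Metric.tendsto_nhds.mp hu _
          (mul_pos hδ (dist_pos.mpr (hne k)))).mono fun _ => le_of_lt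
      obtain ⟨l, hl⟩ := (s.eventually_all.mpr hclose).exists
      exact ⟨l, trivial, hl⟩
  exact ⟨φ, fun i j hij => (hφ i j hij).1, fun i j hij => (hφ i j hij).2⟩

section Holder

variable {X Y : Type*} [PseudoMetricSpace X] [PseudoMetricSpace Y] {f : X → Y} {x : X}
  {M α : ℝ}

theorem dist_le_of_dist_base_le_mul {a b : X} {δ C : ℝ} (hM : 0 ≤ M) (hα : 0 ≤ α)
    (hδ0 : 0 ≤ δ) (hδ1 : δ ≤ 1) (hδC : 1 + δ ^ α ≤ C * (1 - δ) ^ α)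
    (ha : dist (f a) (f x) ≤ M * dist a x ^ α) (hb : dist (f b) (f x) ≤ M * dist b x ^ α)
    (hba : dist b x ≤ δ * dist a x) :
    dist (f a) (f b) ≤ C * M * dist a b ^ α := by
  have hC : 0 ≤ C :=
    (pos_of_mul_pos_left ((by positivity : (0 : ℝ) < 1 + δ ^ α).trans_le hδC) (by positivity)).le
  have hsep : (1 - δ) * dist a x ≤ dist a b := by
    linarith [dist_triangle a b x]
  have hb' : dist b x ^ α ≤ δ ^ α * dist a x ^ α := by
    rw [← Real.mul_rpow hδ0 dist_nonneg]
    exact Real.rpow_le_rpow dist_nonneg hba hα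
  calc dist (f a) (f b) ≤ dist (f a) (f x) + dist (f b) (f x) := dist_triangle_right _ _ _
    _ ≤ M * ((1 + δ ^ α) * dist a x ^ α) := by linarith [mul_le_mul_of_nonneg_left hb' hM]
    _ ≤ M * (C * (1 - δ) ^ α * dist a x ^ α) := by gcongr
    _ = C * M * ((1 - δ) * dist a x) ^ α := by
      rw [Real.mul_rpow (by linarith) dist_nonneg]; ring
    _ ≤ C * M * dist a b ^ α := by gcongr

theorem dist_le_on_insert_range {v : ℕ → X} {K : ℝ} (hα : 0 < α)
    (hx : ∀ i, dist (f (v i)) (f x) ≤ K * dist (v i) x ^ α)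
    (hv : ∀ i j, i < j → dist (f (v i)) (f (v j)) ≤ K * dist (v i) (v j) ^ α) :
    ∀ y ∈ insert x (range v), ∀ y' ∈ insert x (range v),
      dist (f y) (f y') ≤ K * dist y y' ^ α := by
  have hdiag : ∀ y, dist (f y) (f y) ≤ K * dist y y ^ α := fun y => by
    simp [Real.zero_rpow hα.ne']
  rintro y (rfl | ⟨i, rfl⟩) y' (rfl | ⟨j, rfl⟩)
  · exact hdiag _
  · rw [dist_comm, dist_comm _ (v j)]; exact hx j
  · exact hx i
  · rcases lt_trichotomy i j with h | rfl | h
    · exact hv i j h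
    · exact hdiag _
    · rw [dist_comm, dist_comm (v i)]; exact hv j i h

end Holder

theorem exists_strictMono_injective_holderOn_insert_range {X Y : Type*} [MetricSpace X]
    [PseudoMetricSpace Y] {f : X → Y} {u : ℕ → X} {x : X} {M α C : ℝ} (hM : 0 ≤ M)
    (hα : 0 < α) (hC : 1 < C) (hne : ∀ k, u k ≠ x) (hu : Tendsto u atTop (𝓝 x))
    (hf : ∀ k, dist (f (u k)) (f x) ≤ M * dist (u k) x ^ α) :
    ∃ φ : ℕ → ℕ, StrictMono φ ∧ Injective (u ∘ φ) ∧
      ∀ y ∈ insert x (range (u ∘ φ)), ∀ y' ∈ insert x (range (u ∘ φ)),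
        dist (f y) (f y') ≤ C * M * dist y y' ^ α := by
  obtain ⟨δ, hδ0, hδ1, hδC⟩ := exists_pos_lt_one_one_add_rpow_le_mul hC hα
  obtain ⟨φ, hφ, hdecay⟩ := exists_strictMono_dist_le_mul_of_tendsto hu hne hδ0
  have hanti : StrictAnti fun i => dist (u (φ i)) x := fun i j hij =>
    (hdecay i j hij).trans_lt (mul_lt_of_lt_one_left (dist_pos.mpr (hne _)) hδ1)
  refine ⟨φ, hφ, Injective.of_comp (f := fun y => dist y x) hanti.injective,
    dist_le_on_insert_range hα (fun i => ?_) fun i j hij => ?_⟩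
  · exact (hf _).trans
      (mul_le_mul_of_nonneg_right (le_mul_of_one_le_left hM hC.le) (by positivity))
  · exact dist_le_of_dist_base_le_mul hM hα.le hδ0.le hδ1.le hδC (hf _) (hf _) (hdecay i j hij)

theorem uniform_holder_on_subsequence_general (n m : ℕ)
    (α : ℝ) (hα : α ∈ Set.Ioc (0 : ℝ) 1) (M : ℝ) (hM : 0 ≤ M)
    (x : EuclideanSpace ℝ (Fin n)) (x_k : ℕ → EuclideanSpace ℝ (Fin n))
    (hne : ∀ k, x_k k ≠ x) (hlim : Tendsto x_k atTop (𝓝 x))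
    (f : EuclideanSpace ℝ (Fin n) → EuclideanSpace ℝ (Fin m))
    (hf : ∀ k, ‖f x - f (x_k k)‖ ≤ M * ‖x - x_k k‖ ^ α) :
    ∀ ε > (0 : ℝ), ∃ φ : ℕ → ℕ, StrictMono φ ∧
      (∀ i j, i ≠ j → x_k (φ i) ≠ x_k (φ j)) ∧
      ∀ y ∈ insert x (Set.range (x_k ∘ φ)), ∀ y' ∈ insert x (Set.range (x_k ∘ φ)),
        ‖f y - f y'‖ ≤ (2 ^ α + 1 + ε) * M * ‖y - y'‖ ^ α := by
  intro ε hε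
  have hC : 1 < 2 ^ α + 1 + ε := by linarith [Real.rpow_pos_of_pos two_pos α]
  have hf' : ∀ k, dist (f (x_k k)) (f x) ≤ M * dist (x_k k) x ^ α := fun k => by
    simpa only [dist_comm, dist_eq_norm] using hf k
  obtain ⟨φ, hφ, hinj, hholder⟩ :=
    exists_strictMono_injective_holderOn_insert_range hM hα.1 hC hne hlim hf'
  refine ⟨φ, hφ, fun i j hij => hinj.ne hij, fun y hy y' hy' => ?_⟩
  simpa only [dist_eq_norm] using hholder y hy y' hy'

/-- Upgrading pointwise Hölder control along a sequence to a uniform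
Hölder estimate on a subsequence: if `(x_k) ⊆ ℝⁿ \ {x}` converges to `x` and
`|f(x) - f(x_k)| ≤ M |x - x_k|^α` for all `k`, then for every `ε > 0` there is a
subsequence `(x_{φ(k)})` with pairwise distinct terms such that `f` is uniformly
`C^{0,α}` with constant `(2^α + 1 + ε) M` on `C = {x} ∪ {x_{φ(k)} : k ∈ ℕ}`. -/
theorem uniform_holder_on_subsequence (n m : ℕ) (hn : 1 ≤ n) (hm : 1 ≤ m)
    (α : ℝ) (hα : α ∈ Set.Ioc (0 : ℝ) 1) (M : ℝ) (hM : 0 ≤ M)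
    (x : EuclideanSpace ℝ (Fin n)) (x_k : ℕ → EuclideanSpace ℝ (Fin n))
    (hne : ∀ k, x_k k ≠ x) (hlim : Tendsto x_k atTop (𝓝 x))
    (f : EuclideanSpace ℝ (Fin n) → EuclideanSpace ℝ (Fin m))
    (hf : ∀ k, ‖f x - f (x_k k)‖ ≤ M * ‖x - x_k k‖ ^ α) :
    ∀ ε > (0 : ℝ), ∃ φ : ℕ → ℕ, StrictMono φ ∧
      (∀ i j, i ≠ j → x_k (φ i) ≠ x_k (φ j)) ∧
      ∀ y ∈ insert x (Set.range (x_k ∘ φ)), ∀ y' ∈ insert x (Set.range (x_k ∘ φ)),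
        ‖f y - f y'‖ ≤ (2 ^ α + 1 + ε) * M * ‖y - y'‖ ^ α :=
  uniform_holder_on_subsequence_general n m α hα M hM x x_k hne hlim f hf
end

section
/- Let n, m ≥ 1, let E ⊆ ℝ^n have positive Lebesgue outer measure, and let f : E → ℝ^m be a function such that for every x ∈ E there exists ρ(x) > 0 with the property that f(x) ≠ f(x') for every x' ∈ E with 0 < |x − x'| < ρ(x). Then there exists a subset E' ⊆ E of positive Lebesgue outer measure on which f is injective. -/
/-!
Sort the points of `E` by how large their injectivity radius is: countably many classes
`{x | 1/(k+1) < ρ x}` cover `E`, so one of them meets `E` in positive outer measure. Covering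
that piece by countably many balls of radius `1/(2(k+1))` centred on a countable dense set, some ball
still cuts out positive outer measure, and any two of its points are closer than their common
injectivity radius, so `f` separates them.
-/

open MeasureTheory Metric Set

theorem MeasureTheory.exists_measure_inter_pos_of_subset_iUnion {α ι : Type*}
    [MeasurableSpace α] [Countable ι] {μ : Measure α} {s : Set α} {t : ι → Set α}
    (hs : 0 < μ s) (hst : s ⊆ ⋃ i, t i) : ∃ i, 0 < μ (s ∩ t i) :=
  exists_measure_pos_of_not_measure_iUnion_null <| by
    rwa [← inter_iUnion, inter_eq_left.2 hst, ← pos_iff_ne_zero]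

section MetricSpace

variable {X : Type*} [MetricSpace X]

theorem injOn_inter_ball {Y : Type*} {f : X → Y} {s : Set X} {r : ℝ}
    (hf : ∀ x ∈ s, ∀ y ∈ s, 0 < dist x y → dist x y < 2 * r → f x ≠ f y) (c : X) :
    InjOn f (s ∩ ball c r) := by
  intro x hx y hy hxy
  by_contra hne
  have hclose : dist x y < 2 * r := calc
    dist x y ≤ dist x c + dist y c := dist_triangle_right x y c
    _ < 2 * r := by linarith [mem_ball.1 hx.2, mem_ball.1 hy.2]
  exact hf x hx.1 y hy.1 (dist_pos.2 hne) hclose hxy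

variable [MeasurableSpace X] {μ : Measure X}

theorem exists_measure_inter_ball_pos [TopologicalSpace.SeparableSpace X] {s : Set X}
    (hs : 0 < μ s) {r : ℝ} (hr : 0 < r) : ∃ c, 0 < μ (s ∩ ball c r) := by
  obtain ⟨D, hD, hDense⟩ := TopologicalSpace.exists_countable_dense X
  have : Countable D := hD.to_subtype
  have hcover : s ⊆ ⋃ c : D, ball (c : X) r := fun x _ => by
    obtain ⟨c, hcD, hxc⟩ := Metric.mem_closure_iff.1 (hDense x) r hr
    exact mem_iUnion.2 ⟨⟨c, hcD⟩, mem_ball.2 hxc⟩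
  obtain ⟨c, hc⟩ := exists_measure_inter_pos_of_subset_iUnion hs hcover
  exact ⟨c, hc⟩

theorem exists_injOn_measure_pos_of_locally_injOn [TopologicalSpace.SeparableSpace X] {Y : Type*}
    {E : Set X} (hE : 0 < μ E) {f : X → Y}
    (hf : ∀ x ∈ E, ∃ ρ > (0 : ℝ), ∀ x' ∈ E, 0 < dist x x' → dist x x' < ρ → f x ≠ f x') :
    ∃ E' ⊆ E, 0 < μ E' ∧ InjOn f E' := by
  choose! ρ hρ_pos hρ using hf
  have hcover : E ⊆ ⋃ k : ℕ, {x | 1 / ((k : ℝ) + 1) < ρ x} := fun x hx =>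
    mem_iUnion.2 (exists_nat_one_div_lt (hρ_pos x hx))
  obtain ⟨k, hk⟩ := exists_measure_inter_pos_of_subset_iUnion hE hcover
  have hr : (0 : ℝ) < 1 / (2 * ((k : ℝ) + 1)) := by positivity
  obtain ⟨c, hc⟩ := exists_measure_inter_ball_pos hk hr
  refine ⟨_, fun x hx => hx.1.1, hc, injOn_inter_ball (fun x hx y hy hpos hlt => ?_) c⟩
  have htwo : 2 * (1 / (2 * ((k : ℝ) + 1))) = 1 / ((k : ℝ) + 1) := by field_simp
  exact hρ x hx.1 y hy.1 hpos (hlt.trans_le (htwo ▸ hx.2.le))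

end MetricSpace

theorem injective_on_positive_measure_subset_general (n m : ℕ)
    (E : Set (EuclideanSpace ℝ (Fin n))) (hE : 0 < volume E)
    (f : EuclideanSpace ℝ (Fin n) → EuclideanSpace ℝ (Fin m))
    (hf : ∀ x ∈ E, ∃ ρ > (0 : ℝ), ∀ x' ∈ E, 0 < ‖x - x'‖ → ‖x - x'‖ < ρ → f x ≠ f x') :
    ∃ E' ⊆ E, 0 < volume E' ∧ Set.InjOn f E' := by
  simp only [← dist_eq_norm] at hf
  exact exists_injOn_measure_pos_of_locally_injOn hE hf

/-- From local injectivity to injectivity on a positive-measure subset: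
if `E ⊆ ℝⁿ` has positive Lebesgue outer measure and `f : E → ℝᵐ` is such that every
`x ∈ E` has a radius `ρ(x) > 0` with `f(x) ≠ f(x')` for all `x' ∈ E` with
`0 < |x - x'| < ρ(x)`, then `f` is injective on some subset `E' ⊆ E` of positive
Lebesgue outer measure. -/
theorem injective_on_positive_measure_subset (n m : ℕ) (hn : 1 ≤ n) (hm : 1 ≤ m)
    (E : Set (EuclideanSpace ℝ (Fin n))) (hE : 0 < volume E)
    (f : EuclideanSpace ℝ (Fin n) → EuclideanSpace ℝ (Fin m))
    (hf : ∀ x ∈ E, ∃ ρ > (0 : ℝ), ∀ x' ∈ E, 0 < ‖x - x'‖ → ‖x - x'‖ < ρ → f x ≠ f x') :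
    ∃ E' ⊆ E, 0 < volume E' ∧ Set.InjOn f E' :=
  injective_on_positive_measure_subset_general n m E hE f hf
end

section
/- Let m ≥ 1, let f : ℝ^m → ℝ^m be differentiable, let λ : ℝ^m → ℝ and r : ℝ^m → ℝ^m be functions, and let J ⊆ ℝ be a nondegenerate open interval. Assume: (i) for every v ∈ ℝ^m, r(v) ≠ 0 and the kernel of the linear map Df(v) − λ(v)·id on ℝ^m is contained in the span of r(v); (ii) λ is differentiable and linearly degenerate, i.e. Dλ(v)(r(v)) = 0 for all v; (iii) V : J → ℝ^m satisfies λ(V(ξ)) = ξ for all ξ ∈ J; (iv) there is a point ξ₀ ∈ J at which V is differentiable and at which the map ξ ↦ f(V(ξ)) − ξ·V(ξ) is differentiable with derivative equal to −V(ξ₀). Then a contradiction follows; i.e., no such V exists. -/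
/-!
Differentiating `λ(V(ξ)) = ξ` at `ξ₀` gives `Dλ(V)V' = 1`. Expanding the conservation law
`(f(V) - ξV)' = -V` at `ξ₀` gives `Df(V)V' = ξ₀V' = λ(V)V'`, so `V'` is a multiple of `r(V)`,
and linear degeneracy then forces `Dλ(V)V' = 0`.
-/

open Topology

section SelfSimilar

variable {𝕜 : Type*} [NontriviallyNormedField 𝕜] {E : Type*} [NormedAddCommGroup E]
  [NormedSpace 𝕜 E]

theorem HasDerivAt.of_sub_smul_self {F V : 𝕜 → E} {x : 𝕜} {V' : E} (hV : HasDerivAt V V' x)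
    (h : HasDerivAt (fun ξ => F ξ - ξ • V ξ) (-V x) x) : HasDerivAt F (x • V') x := by
  convert h.add ((hasDerivAt_id x).smul hV) using 1
  · ext ξ
    simp
  · simp

theorem fderiv_apply_deriv_eq_smul_of_hasDerivAt_sub_smul {f : E → E} {V : 𝕜 → E} {x : 𝕜}
    (hf : DifferentiableAt 𝕜 f (V x)) (hV : DifferentiableAt 𝕜 V x)
    (h : HasDerivAt (fun ξ => f (V ξ) - ξ • V ξ) (-V x) x) :
    fderiv 𝕜 f (V x) (deriv V x) = x • deriv V x :=
  (hf.hasFDerivAt.comp_hasDerivAt x hV.hasDerivAt).unique (hV.hasDerivAt.of_sub_smul_self h)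

theorem fderiv_apply_deriv_eq_one_of_comp_eventuallyEq_id {lam : E → 𝕜} {V : 𝕜 → E} {x : 𝕜}
    (hlam : DifferentiableAt 𝕜 lam (V x)) (hV : DifferentiableAt 𝕜 V x)
    (h : lam ∘ V =ᶠ[𝓝 x] id) : fderiv 𝕜 lam (V x) (deriv V x) = 1 :=
  (hlam.hasFDerivAt.comp_hasDerivAt x hV.hasDerivAt).unique
    ((hasDerivAt_id x).congr_of_eventuallyEq h)

end SelfSimilar

theorem linearly_degenerate_contradiction_general (m : ℕ)
    (f : EuclideanSpace ℝ (Fin m) → EuclideanSpace ℝ (Fin m)) (hf : Differentiable ℝ f)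
    (lam : EuclideanSpace ℝ (Fin m) → ℝ) (hlam : Differentiable ℝ lam)
    (r : EuclideanSpace ℝ (Fin m) → EuclideanSpace ℝ (Fin m))
    (hker : ∀ v w, fderiv ℝ f v w = lam v • w → ∃ c : ℝ, w = c • r v)
    (hdeg : ∀ v, fderiv ℝ lam v (r v) = 0)
    (J : Set ℝ) (a b : ℝ) (hJ : J = Set.Ioo a b)
    (V : ℝ → EuclideanSpace ℝ (Fin m))
    (hV : ∀ ξ ∈ J, lam (V ξ) = ξ)
    (ξ₀ : ℝ) (hξ₀ : ξ₀ ∈ J)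
    (hVdiff : DifferentiableAt ℝ V ξ₀)
    (heq : HasDerivAt (fun ξ => f (V ξ) - ξ • V ξ) (-(V ξ₀)) ξ₀) :
    False := by
  have heigen : fderiv ℝ f (V ξ₀) (deriv V ξ₀) = lam (V ξ₀) • deriv V ξ₀ := by
    rw [hV ξ₀ hξ₀]
    exact fderiv_apply_deriv_eq_smul_of_hasDerivAt_sub_smul (hf _) hVdiff heq
  obtain ⟨c, hc⟩ := hker _ _ heigen
  have hlamV : lam ∘ V =ᶠ[𝓝 ξ₀] id := by
    filter_upwards [(hJ ▸ isOpen_Ioo : IsOpen J).mem_nhds hξ₀] with ξ hξ using hV ξ hξ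
  have hone := fderiv_apply_deriv_eq_one_of_comp_eventuallyEq_id (hlam _) hVdiff hlamV
  rw [hc, map_smul, hdeg, smul_zero] at hone
  exact zero_ne_one hone

/-- Nonexistence of a differentiability point for a self-similar solution
with a linearly degenerate eigenvalue: let `f : ℝᵐ → ℝᵐ` be differentiable, `λ` a
differentiable eigenvalue with eigenvector field `r` such that `r(v) ≠ 0`, the kernel of
`Df(v) - λ(v)·id` is contained in the span of `r(v)`, and `Dλ(v)(r(v)) = 0` (linear
degeneracy). If `V : J → ℝᵐ` satisfies `λ(V(ξ)) = ξ` on a nondegenerate open interval `J`,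
and at some `ξ₀ ∈ J` both `V` and `ξ ↦ f(V(ξ)) - ξ·V(ξ)` are differentiable with the
latter having derivative `-V(ξ₀)` (i.e. the conservation law `(f(V) - ξV)_ξ = -V` holds at
`ξ₀`), then a contradiction follows. -/
theorem linearly_degenerate_contradiction (m : ℕ) (hm : 1 ≤ m)
    (f : EuclideanSpace ℝ (Fin m) → EuclideanSpace ℝ (Fin m)) (hf : Differentiable ℝ f)
    (lam : EuclideanSpace ℝ (Fin m) → ℝ) (hlam : Differentiable ℝ lam)
    (r : EuclideanSpace ℝ (Fin m) → EuclideanSpace ℝ (Fin m))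
    (hr : ∀ v, r v ≠ 0)
    (hker : ∀ v w, fderiv ℝ f v w = lam v • w → ∃ c : ℝ, w = c • r v)
    (hdeg : ∀ v, fderiv ℝ lam v (r v) = 0)
    (J : Set ℝ) (a b : ℝ) (hab : a < b) (hJ : J = Set.Ioo a b)
    (V : ℝ → EuclideanSpace ℝ (Fin m))
    (hV : ∀ ξ ∈ J, lam (V ξ) = ξ)
    (ξ₀ : ℝ) (hξ₀ : ξ₀ ∈ J)
    (hVdiff : DifferentiableAt ℝ V ξ₀)
    (heq : HasDerivAt (fun ξ => f (V ξ) - ξ • V ξ) (-(V ξ₀)) ξ₀) :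
    False :=
  linearly_degenerate_contradiction_general m f hf lam hlam r hker hdeg J a b hJ V hV ξ₀ hξ₀ hVdiff
    heq
end
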